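/- arXiv:2411.08000 — 9 statements merged into one kernel-verified Lean document; each statement's English description precedes it below -/
import Mathlib

section
/- If f : H → (-∞,+∞] is proper, lower semicontinuous, and convex on a real Hilbert space H, and x ∈ dom ∂f, then for every t > 0 and every u ∈ ∂f(x), the point (x + t·u, f(x) − t) does not belong to the epigraph of f, and its metric projection onto epi f equals (x, f(x)). -/
open scoped Classical
open Filter Set Topology

noncomputable section

/-- `f` is proper, convex and lower semicontinuous (the class `Γ₀`). -/
def Gamma0 {E : Type*} [NormedAddCommGroup E] [NormedSpace ℝ E] (f : E → EReal) : Prop :=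
  (∃ x, f x ≠ ⊤) ∧ (∀ x, f x ≠ ⊥) ∧
  (∀ x y : E, ∀ a b : ℝ, 0 ≤ a → 0 ≤ b → a + b = 1 →
    f (a • x + b • y) ≤ (a : EReal) * f x + (b : EReal) * f y) ∧
  LowerSemicontinuous f

/-- recession function of `f` with base point `x0 ∈ dom f`:
`(rec f)(x) = lim_{t→∞} (f(x0+tx)-f(x0))/t`, which by convexity equals the supremum. -/
def recFn {E : Type*} [NormedAddCommGroup E] [NormedSpace ℝ E]
    (f : E → EReal) (x0 : E) (x : E) : EReal :=
  ⨆ t ∈ Set.Ioi (0 : ℝ), (f (x0 + t • x) - f x0) * ((t⁻¹ : ℝ) : EReal)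

/-- the perspective function of `f` (recession with base point `x0 ∈ dom f`). -/
def persp {E : Type*} [NormedAddCommGroup E] [NormedSpace ℝ E]
    (f : E → EReal) (x0 : E) (p : E × ℝ) : EReal :=
  if 0 < p.2 then (p.2 : EReal) * f (p.2⁻¹ • p.1)
  else if p.2 = 0 then recFn f x0 p.1 else ⊤

/-- Fenchel conjugate. -/
def conj {E : Type*} [NormedAddCommGroup E] [InnerProductSpace ℝ E]
    (f : E → EReal) (u : E) : EReal :=
  ⨆ x, ((inner ℝ x u : ℝ) : EReal) - f x

/-- Fenchel conjugate on `ℝ`. -/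
def conjR (f : ℝ → EReal) (u : ℝ) : EReal := ⨆ x : ℝ, ((x * u : ℝ) : EReal) - f x

/-- Fenchel conjugate on `E × ℝ` (with the Hilbert direct sum inner product). -/
def conj2 {E : Type*} [NormedAddCommGroup E] [InnerProductSpace ℝ E]
    (g : E × ℝ → EReal) (q : E × ℝ) : EReal :=
  ⨆ p : E × ℝ, (((inner ℝ p.1 q.1 : ℝ) + p.2 * q.2 : ℝ) : EReal) - g p

/-- indicator function of a set. -/
def indE {E : Type*} (C : Set E) (x : E) : EReal := if x ∈ C then 0 else ⊤

/-- support function of a set. -/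
def suppFn {E : Type*} [NormedAddCommGroup E] [InnerProductSpace ℝ E]
    (C : Set E) (x : E) : EReal := ⨆ u ∈ C, ((inner ℝ u x : ℝ) : EReal)

/-- epigraph of an extended-real-valued function. -/
def epi {E : Type*} (f : E → EReal) : Set (E × ℝ) := {p | f p.1 ≤ (p.2 : EReal)}

/-- epigraph of the perspective of `f`, as a subset of `E × ℝ × ℝ`. -/
def epiPersp {E : Type*} [NormedAddCommGroup E] [NormedSpace ℝ E]
    (f : E → EReal) (x0 : E) : Set (E × ℝ × ℝ) :=
  {p | persp f x0 (p.1, p.2.1) ≤ (p.2.2 : EReal)}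

/-- `p` is the metric projection of `z` onto `C ⊆ E`. -/
def IsProjE {E : Type*} [NormedAddCommGroup E] (C : Set E) (z p : E) : Prop :=
  p ∈ C ∧ ∀ q ∈ C, ‖z - p‖ ≤ ‖z - q‖

/-- `p` is the metric projection of `z` onto `C ⊆ E ⊕ ℝ` (Hilbert direct sum distance). -/
def IsProj2 {E : Type*} [NormedAddCommGroup E] (C : Set (E × ℝ)) (z p : E × ℝ) : Prop :=
  p ∈ C ∧ ∀ q ∈ C,
    ‖z.1 - p.1‖ ^ 2 + (z.2 - p.2) ^ 2 ≤ ‖z.1 - q.1‖ ^ 2 + (z.2 - q.2) ^ 2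

/-- `p` is the metric projection of `z` onto `C ⊆ E ⊕ ℝ ⊕ ℝ` (Hilbert direct sum distance). -/
def IsProj3 {E : Type*} [NormedAddCommGroup E] (C : Set (E × ℝ × ℝ)) (z p : E × ℝ × ℝ) : Prop :=
  p ∈ C ∧ ∀ q ∈ C,
    ‖z.1 - p.1‖ ^ 2 + (z.2.1 - p.2.1) ^ 2 + (z.2.2 - p.2.2) ^ 2 ≤
      ‖z.1 - q.1‖ ^ 2 + (z.2.1 - q.2.1) ^ 2 + (z.2.2 - q.2.2) ^ 2

/-- `p = prox_{γ g}(z)` on `E`. -/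
def IsProxE {E : Type*} [NormedAddCommGroup E] (g : E → EReal) (γ : ℝ) (z p : E) : Prop :=
  ∀ y, g p + ((‖z - p‖ ^ 2 / (2 * γ) : ℝ) : EReal) ≤ g y + ((‖z - y‖ ^ 2 / (2 * γ) : ℝ) : EReal)

/-- `p = prox_{γ g}(z)` on `E ⊕ ℝ` (Hilbert direct sum distance). -/
def IsProx2 {E : Type*} [NormedAddCommGroup E] (g : E × ℝ → EReal) (γ : ℝ)
    (z p : E × ℝ) : Prop :=
  ∀ y, g p + (((‖z.1 - p.1‖ ^ 2 + (z.2 - p.2) ^ 2) / (2 * γ) : ℝ) : EReal) ≤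
    g y + (((‖z.1 - y.1‖ ^ 2 + (z.2 - y.2) ^ 2) / (2 * γ) : ℝ) : EReal)

/-- subdifferential of `f` at `x`. -/
def subdiff {E : Type*} [NormedAddCommGroup E] [InnerProductSpace ℝ E]
    (f : E → EReal) (x : E) : Set E :=
  {u | ∀ y, ((inner ℝ (y - x) u : ℝ) : EReal) + f x ≤ f y}

/-!
The subgradient inequality puts `epi f` inside the half-space `{(y, s) | ⟪y - x, u⟫ + f x ≤ s}`,
whose outward normal at its boundary point `(x, f x)` is `(u, -1)`. Hence `(x, f x)` is the nearest
point of the half-space to `(x, f x) + t (u, -1)`, hence also of the smaller set `epi f`, which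
contains `(x, f x)`; and `(x, f x) + t (u, -1)` lies strictly outside the half-space.
-/

section Subgradient

variable {H : Type*} [NormedAddCommGroup H] [InnerProductSpace ℝ H]

lemma inner_sub_add_le_of_mem_epi {f : H → EReal} {x u : H} {fx : ℝ} (hfx : f x = fx)
    (hu : u ∈ subdiff f x) {p : H × ℝ} (hp : p ∈ epi f) :
    inner ℝ (p.1 - x) u + fx ≤ p.2 := by
  have h := (hu p.1).trans hp
  rw [hfx] at h
  exact_mod_cast h

lemma sq_dist_le_of_inner_sub_add_le {x y u : H} {a s t : ℝ} (ht : 0 ≤ t)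
    (h : inner ℝ (y - x) u + a ≤ s) :
    ‖x + t • u - x‖ ^ 2 + (a - t - a) ^ 2 ≤ ‖x + t • u - y‖ ^ 2 + (a - t - s) ^ 2 := by
  have hsub : x + t • u - y = t • u - (y - x) := by abel
  rw [add_sub_cancel_left, hsub, norm_sub_sq_real, real_inner_smul_left, real_inner_comm,
    norm_smul, Real.norm_of_nonneg ht]
  nlinarith [sq_nonneg ‖y - x‖, sq_nonneg (s - a), mul_nonneg ht (sub_nonneg.2 h)]

end Subgradient

theorem stmt0_general {H : Type*} [NormedAddCommGroup H] [InnerProductSpace ℝ H]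
    (f : H → EReal) (x : H) (fx : ℝ) (hfx : f x = (fx : EReal))
    (u : H) (hu : u ∈ subdiff f x) (t : ℝ) (ht : 0 < t) :
    (x + t • u, fx - t) ∉ epi f ∧
      IsProj2 (epi f) (x + t • u, fx - t) (x, fx) := by
  refine ⟨fun hmem => ?_, ?_, fun q hq => ?_⟩
  · have h := inner_sub_add_le_of_mem_epi hfx hu hmem
    rw [add_sub_cancel_left, real_inner_smul_left, real_inner_self_eq_norm_sq] at h
    nlinarith [sq_nonneg ‖u‖]
  · exact hfx.le
  · exact sq_dist_le_of_inner_sub_add_le ht.le (inner_sub_add_le_of_mem_epi hfx hu hq)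

theorem stmt0 {H : Type*} [NormedAddCommGroup H] [InnerProductSpace ℝ H] [CompleteSpace H]
    (f : H → EReal) (hf : Gamma0 f) (x : H) (fx : ℝ) (hfx : f x = (fx : EReal))
    (u : H) (hu : u ∈ subdiff f x) (t : ℝ) (ht : 0 < t) :
    (x + t • u, fx - t) ∉ epi f ∧
      IsProj2 (epi f) (x + t • u, fx - t) (x, fx) :=
  stmt0_general f x fx hfx u hu t ht
end
end

section
/- Let f ∈ Γ₀(H) and let f̃ be its perspective. Then the Fenchel conjugate of f̃ equals the indicator function of the set C = {(u,μ) ∈ H × ℝ : μ + f*(u) ≤ 0}. -/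
open scoped Classical
open Filter Set Topology

noncomputable section

/-! (u, μ) lies in C exactly when y ↦ ⟪y, u⟫ + μ is an affine minorant of f. An affine minorant
stays below the perspective: η f(x/η) ≥ ⟪x, u⟫ + ημ for η > 0, and letting t → ∞ in
(f(x0 + t x) - f x0)/t ≥ ⟪x, u⟫ + (⟪x0, u⟫ + μ - f x0)/t gives rec f ≥ ⟪·, u⟫. So every term of the
conjugate is ≤ 0, and the point (0, 0) contributes 0. Otherwise f y < ⟪y, u⟫ + μ for some y, and the
terms at (η y, η) equal η (⟪y, u⟫ + μ - f y), which is unbounded as η → ∞. -/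

open scoped RealInnerProductSpace

section NormedSpace

variable {E : Type*} [NormedAddCommGroup E] [NormedSpace ℝ E] {f : E → EReal} {x0 : E}

lemma persp_smul_of_pos (y : E) {η : ℝ} (hη : 0 < η) : persp f x0 (η • y, η) = η * f y := by
  simp [persp, hη, smul_smul, hη.ne']

lemma recFn_zero (htop : f x0 ≠ ⊤) (hbot : f x0 ≠ ⊥) : recFn f x0 0 = 0 := by
  simp only [recFn, smul_zero, add_zero, EReal.sub_self htop hbot, zero_mul]
  exact biSup_const nonempty_Ioi

end NormedSpace

section InnerProductSpace

variable {E : Type*} [NormedAddCommGroup E] [InnerProductSpace ℝ E] {f : E → EReal} {x0 u : E}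
  {μ : ℝ}

lemma coe_add_conj_nonpos_iff :
    (μ : EReal) + conj f u ≤ 0 ↔ ∀ y, ((⟪y, u⟫ + μ : ℝ) : EReal) ≤ f y := by
  have hshift : (μ : EReal) + conj f u ≤ 0 ↔ conj f u ≤ ((-μ : ℝ) : EReal) := by
    induction conj f u with
    | bot => simp
    | top => simp
    | coe c => norm_cast; constructor <;> intro <;> linarith
  rw [hshift, conj, iSup_le_iff]
  refine forall_congr' fun y => ?_
  induction f y with
  | bot => simp
  | top => simp
  | coe c => norm_cast; constructor <;> intro <;> linarith

lemma coe_inner_le_recFn (hx0 : f x0 ≠ ⊤) (hmin : ∀ y, ((⟪y, u⟫ + μ : ℝ) : EReal) ≤ f y)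
    (x : E) : (⟪x, u⟫ : EReal) ≤ recFn f x0 x := by
  obtain ⟨r, hr⟩ : ∃ r : ℝ, f x0 = r :=
    ⟨_, (EReal.coe_toReal hx0 (ne_bot_of_le_ne_bot (EReal.coe_ne_bot _) (hmin x0))).symm⟩
  set c := ⟪x0, u⟫ + μ - r
  have hbound : ∀ t > 0, ((⟪x, u⟫ + c * t⁻¹ : ℝ) : EReal) ≤ recFn f x0 x := by
    intro t ht
    calc ((⟪x, u⟫ + c * t⁻¹ : ℝ) : EReal) = (((⟪x0 + t • x, u⟫ + μ) - r) * t⁻¹ : ℝ) := by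
          congr 1; rw [inner_add_left, real_inner_smul_left]; field_simp; ring
      _ ≤ (f (x0 + t • x) - f x0) * ((t⁻¹ : ℝ) : EReal) := by
          rw [hr, EReal.coe_mul, EReal.coe_sub]
          exact mul_le_mul_of_nonneg_right (EReal.sub_le_sub (hmin _) le_rfl) (by positivity)
      _ ≤ recFn f x0 x :=
          le_iSup₂ (f := fun t (_ : t ∈ Ioi 0) => (f (x0 + t • x) - f x0) * ((t⁻¹ : ℝ) : EReal))
            t ht
  have hlim : Tendsto (fun t : ℝ => ((⟪x, u⟫ + c * t⁻¹ : ℝ) : EReal)) atTop (𝓝 ⟪x, u⟫) := by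
    refine EReal.tendsto_coe.2 ?_
    simpa using tendsto_const_nhds.add (tendsto_inv_atTop_zero.const_mul c)
  exact le_of_tendsto hlim ((eventually_gt_atTop 0).mono hbound)

lemma coe_inner_add_le_persp (hx0 : f x0 ≠ ⊤) (hmin : ∀ y, ((⟪y, u⟫ + μ : ℝ) : EReal) ≤ f y)
    (p : E × ℝ) : ((⟪p.1, u⟫ + p.2 * μ : ℝ) : EReal) ≤ persp f x0 p := by
  obtain ⟨x, η⟩ := p
  rcases lt_trichotomy η 0 with hη | rfl | hη
  · simp [persp, hη.not_gt, hη.ne]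
  · simpa [persp] using coe_inner_le_recFn hx0 hmin x
  · calc ((⟪x, u⟫ + η * μ : ℝ) : EReal) = η * ((⟪η⁻¹ • x, u⟫ + μ : ℝ) : EReal) := by
          rw [← EReal.coe_mul]; congr 1; rw [real_inner_smul_left]; field_simp
      _ ≤ η * f (η⁻¹ • x) := mul_le_mul_of_nonneg_left (hmin _) (by exact_mod_cast hη.le)
      _ = persp f x0 (x, η) := by simp [persp, hη]

lemma conj2_persp_eq_zero (hx0 : f x0 ≠ ⊤) (hmin : ∀ y, ((⟪y, u⟫ + μ : ℝ) : EReal) ≤ f y) :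
    conj2 (persp f x0) (u, μ) = 0 := by
  refine le_antisymm (iSup_le fun p => EReal.sub_nonpos.2 (coe_inner_add_le_persp hx0 hmin p)) ?_
  have hbot : f x0 ≠ ⊥ := ne_bot_of_le_ne_bot (EReal.coe_ne_bot _) (hmin x0)
  refine le_trans ?_ (le_iSup _ ((0 : E), (0 : ℝ)))
  simp [persp, recFn_zero hx0 hbot]

lemma conj2_persp_eq_top (h : ∃ y, f y < ((⟪y, u⟫ + μ : ℝ) : EReal)) :
    conj2 (persp f x0) (u, μ) = ⊤ := by
  obtain ⟨y, hy⟩ := h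
  have hterm : ∀ η > 0,
      ((η * (⟪y, u⟫ + μ) : ℝ) : EReal) - η * f y ≤ conj2 (persp f x0) (u, μ) := by
    intro η hη
    refine le_trans (le_of_eq ?_) (le_iSup _ (η • y, η))
    rw [persp_smul_of_pos y hη, real_inner_smul_left, mul_add]
  induction hfy : f y with
  | bot => simpa [hfy, EReal.coe_mul_bot_of_pos] using hterm 1 one_pos
  | top => simp [hfy] at hy
  | coe r =>
    rw [hfy, EReal.coe_lt_coe_iff] at hy
    refine EReal.eq_top_iff_forall_lt _ |>.2 fun b => ?_
    have hgap : 0 < ⟪y, u⟫ + μ - r := sub_pos.2 hy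
    refine lt_of_lt_of_le ?_ (hfy ▸ hterm ((|b| + 1) / (⟪y, u⟫ + μ - r)) (by positivity))
    rw [← EReal.coe_mul, ← EReal.coe_sub, EReal.coe_lt_coe_iff, ← mul_sub,
      div_mul_cancel₀ _ hgap.ne']
    linarith [le_abs_self b]

end InnerProductSpace

theorem stmt2_general {H : Type*} [NormedAddCommGroup H] [InnerProductSpace ℝ H]
    (f : H → EReal) (x0 : H) (hx0 : f x0 ≠ ⊤) :
    conj2 (persp f x0) =
      indE {q : H × ℝ | (q.2 : EReal) + conj f q.1 ≤ 0} := by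
  funext ⟨u, μ⟩
  simp only [indE, mem_ofPred_eq, coe_add_conj_nonpos_iff]
  split_ifs with hmin
  · exact conj2_persp_eq_zero hx0 hmin
  · push Not at hmin
    exact conj2_persp_eq_top hmin

theorem stmt2 {H : Type*} [NormedAddCommGroup H] [InnerProductSpace ℝ H] [CompleteSpace H]
    (f : H → EReal) (hf : Gamma0 f) (x0 : H) (hx0 : f x0 ≠ ⊤) :
    conj2 (persp f x0) =
      indE {q : H × ℝ | (q.2 : EReal) + conj f q.1 ≤ 0} :=
  stmt2_general f x0 hx0
end
end

section
/- Let f ∈ Γ₀(H), let f̃ be its perspective, and let (x,η,δ) ∈ H × ℝ × ℝ. If f̃(P_{cl(dom f̃)}(x,η)) ≤ δ, then the projection of (x,η,δ) onto epi f̃ equals (P_{cl(dom f̃)}(x,η), δ). -/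
open scoped Classical
open Filter Set Topology

noncomputable section

theorem isProj3_of_isProj2 {E : Type*} [NormedAddCommGroup E] {C : Set (E × ℝ)}
    {D : Set (E × ℝ × ℝ)} (hD : ∀ q ∈ D, (q.1, q.2.1) ∈ C) {z p : E × ℝ} {δ : ℝ}
    (hp : IsProj2 C z p) (hpD : (p.1, p.2, δ) ∈ D) :
    IsProj3 D (z.1, z.2, δ) (p.1, p.2, δ) := by
  refine ⟨hpD, fun q hq => ?_⟩
  have hdist := hp.2 _ (hD q hq)
  rw [sub_self, zero_pow two_ne_zero, add_zero]
  linarith [sq_nonneg (δ - q.2.2)]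

theorem persp_ne_top_of_mem_epiPersp {E : Type*} [NormedAddCommGroup E] [NormedSpace ℝ E]
    {f : E → EReal} {x0 : E} {q : E × ℝ × ℝ} (hq : q ∈ epiPersp f x0) :
    persp f x0 (q.1, q.2.1) ≠ ⊤ :=
  ne_top_of_le_ne_top (EReal.coe_ne_top _) hq

theorem stmt5_general {H : Type*} [NormedAddCommGroup H] [InnerProductSpace ℝ H]
    (f : H → EReal) (x0 : H)
    (x : H) (η δ : ℝ) (p : H × ℝ)
    (hp : IsProj2 (closure {q : H × ℝ | persp f x0 q ≠ ⊤}) (x, η) p)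
    (hle : persp f x0 p ≤ (δ : EReal)) :
    IsProj3 (epiPersp f x0) (x, η, δ) (p.1, p.2, δ) :=
  isProj3_of_isProj2 (fun _ hq => subset_closure (persp_ne_top_of_mem_epiPersp hq)) hp hle

theorem stmt5 {H : Type*} [NormedAddCommGroup H] [InnerProductSpace ℝ H] [CompleteSpace H]
    (f : H → EReal) (hf : Gamma0 f) (x0 : H) (hx0 : f x0 ≠ ⊤)
    (x : H) (η δ : ℝ) (p : H × ℝ)
    (hp : IsProj2 (closure {q : H × ℝ | persp f x0 q ≠ ⊤}) (x, η) p)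
    (hle : persp f x0 p ≤ (δ : EReal)) :
    IsProj3 (epiPersp f x0) (x, η, δ) (p.1, p.2, δ) :=
  stmt5_general f x0 x η δ p hp hle
end
end

section
/- Let f ∈ Γ₀(H), μ > 0, and (x,η) ∈ H × ℝ. If η + μ f*(P_{cl(dom f*)}(x/μ)) ≤ 0, then prox_{μ f̃}(x,η) = (prox_{μ·(rec f)} x, 0) and f̃(prox_{μ f̃}(x,η)) = (rec f)(prox_{μ·(rec f)} x). -/
open scoped Classical
open Filter Set Topology

noncomputable section

/-!
Put `d = x - μ • w`. Since `w` is the projection of `x / μ` onto the closed convex set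
`cl (dom f*)`, `⟪u, d⟫ ≤ ⟪w, d⟫` for every `u ∈ dom f*`; as `rec f` is the support function of
`dom f*` (Fenchel–Moreau, through a non-vertical hyperplane separating a point from `epi f`), this
gives `rec f (d) ≤ ⟪w, d⟫`. Testing the prox inequality of `r` at `d` then bounds
`rec f (r) + ‖x - r‖² / (2μ)` by `⟪w, x⟫ - μ ‖w‖² / 2`.
For a competitor `(y, t)` with `t > 0`, Fenchel–Young and the hypothesis on `η` give
`f̃ (y, t) ≥ ⟪y, w⟫ - t f*(w) ≥ ⟪y, w⟫ + t η / μ`, and the prox inequality for `(r, 0)` reduces to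
`‖x - y - μ w‖² + t² ≥ 0`. For `t = 0` it is the prox inequality of `r`, and for `t < 0` the
perspective is `⊤`.
-/

open scoped InnerProductSpace

section Epigraph

lemma LowerSemicontinuous.isClosed_epi {X : Type*} [TopologicalSpace X] {f : X → EReal}
    (hf : LowerSemicontinuous f) : IsClosed (epi f) :=
  hf.isClosed_epigraph.preimage
    (continuous_fst.prodMk (continuous_coe_real_ereal.comp continuous_snd))

variable {E : Type*} [NormedAddCommGroup E] [NormedSpace ℝ E] {f : E → EReal}

lemma Gamma0.convex_epi (hf : Gamma0 f) : Convex ℝ (epi f) := by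
  rintro ⟨y, ρ⟩ hy ⟨y', ρ'⟩ hy' a b ha hb hab
  show f (a • y + b • y') ≤ ((a * ρ + b * ρ' : ℝ) : EReal)
  calc f (a • y + b • y') ≤ a * f y + b * f y' := hf.2.2.1 y y' a b ha hb hab
    _ ≤ a * ρ + b * ρ' := add_le_add (mul_le_mul_of_nonneg_left hy (by exact_mod_cast ha))
        (mul_le_mul_of_nonneg_left hy' (by exact_mod_cast hb))
    _ = ((a * ρ + b * ρ' : ℝ) : EReal) := by norm_cast

lemma Gamma0.exists_separation (hf : Gamma0 f) {v : E} {α : ℝ} (hv : ¬ f v ≤ α) :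
    ∃ (ℓ : E →L[ℝ] ℝ) (s c : ℝ), 0 ≤ s ∧ ℓ v + α * s < c ∧
      ∀ y (ρ : ℝ), f y ≤ ρ → c < ℓ y + ρ * s := by
  obtain ⟨φ, c, hφv, hφ⟩ := geometric_hahn_banach_point_closed hf.convex_epi
    hf.2.2.2.isClosed_epi (show (v, α) ∉ epi f from hv)
  set ℓ := φ.comp (ContinuousLinearMap.inl ℝ E ℝ)
  set s := φ (0, 1)
  have hφ_apply (y : E) (ρ : ℝ) : φ (y, ρ) = ℓ y + ρ * s := by
    rw [show ((y, ρ) : E × ℝ) = (y, 0) + ρ • (0, 1) by simp, map_add, map_smul, smul_eq_mul]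
    rfl
  have hsep (y : E) (ρ : ℝ) (h : f y ≤ ρ) : c < ℓ y + ρ * s := hφ_apply y ρ ▸ hφ (y, ρ) h
  refine ⟨ℓ, s, c, ?_, hφ_apply v α ▸ hφv, hsep⟩
  -- `epi f` contains the vertical half-line above a point of `dom f`, on which `φ` stays above `c`
  by_contra! hs
  obtain ⟨x0, hx0⟩ := hf.1
  have h1 := hsep x0 (max (f x0).toReal ((c - ℓ x0) / s))
    ((EReal.le_coe_toReal hx0).trans (by exact_mod_cast le_max_left _ _))
  have h2 := (div_le_iff_of_neg hs).1 (le_max_right (f x0).toReal ((c - ℓ x0) / s))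
  linarith

lemma Gamma0.exists_nonvertical_separation (hf : Gamma0 f) {v : E} {α : ℝ} (hv : ¬ f v ≤ α) :
    ∃ (ℓ : E →L[ℝ] ℝ) (s c : ℝ), 0 < s ∧ ℓ v + α * s < c ∧
      ∀ y (ρ : ℝ), f y ≤ ρ → c < ℓ y + ρ * s := by
  obtain ⟨ℓ, s, c, hs, hv, hsep⟩ := hf.exists_separation hv
  obtain ⟨x0, hx0⟩ := hf.1
  set F0 := (f x0).toReal
  have hF0 : f x0 = F0 := (EReal.coe_toReal hx0 (hf.2.1 x0)).symm
  obtain ⟨ℓ₀, s₀, c₀, -, hsx0, hsep₀⟩ := hf.exists_separation (v := x0) (α := F0 - 1)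
    (by rw [hF0, EReal.coe_le_coe_iff]; linarith)
  have hs₀ : 0 < s₀ := by linarith [hsep₀ x0 _ hF0.le]
  -- tilting by a small multiple of the non-vertical `(ℓ₀, s₀, c₀)` keeps `(v, α)` separated
  set e := ℓ₀ v + α * s₀ - c₀
  set t := (c - ℓ v - α * s) / (|e| + 1)
  have ht : 0 < t := div_pos (by linarith) (by positivity)
  have hte : t * e < c - ℓ v - α * s := by
    calc t * e ≤ t * |e| := mul_le_mul_of_nonneg_left (le_abs_self e) ht.le
      _ < t * (|e| + 1) := by linarith
      _ = c - ℓ v - α * s := div_mul_cancel₀ _ (by positivity)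
  refine ⟨ℓ + t • ℓ₀, s + t * s₀, c + t * c₀, by positivity, ?_, fun y ρ h => ?_⟩
  · simp only [add_apply, smul_apply, smul_eq_mul]
    linarith
  · simp only [add_apply, smul_apply, smul_eq_mul]
    linarith [hsep y ρ h, mul_lt_mul_of_pos_left (hsep₀ y ρ h) ht]

end Epigraph

section Conjugate

variable {H : Type*} [NormedAddCommGroup H] [InnerProductSpace ℝ H] {f : H → EReal}

def IsAffineMinorant (f : H → EReal) (u : H) (β : ℝ) : Prop :=
  ∀ y, ((⟪y, u⟫_ℝ - β : ℝ) : EReal) ≤ f y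

lemma conj_le_coe_iff {u : H} {β : ℝ} : conj f u ≤ β ↔ IsAffineMinorant f u β := by
  simp only [conj, iSup_le_iff, IsAffineMinorant]
  refine forall_congr' fun y => ?_
  rw [EReal.coe_sub,
    EReal.sub_le_iff_le_add (.inr (EReal.coe_ne_top _)) (.inr (EReal.coe_ne_bot _)),
    EReal.sub_le_iff_le_add (.inl (EReal.coe_ne_bot _)) (.inl (EReal.coe_ne_top _)), add_comm]

lemma conj_ne_top_iff {u : H} : conj f u ≠ ⊤ ↔ ∃ β, IsAffineMinorant f u β := by
  refine ⟨fun h => ⟨(conj f u).toReal, conj_le_coe_iff.1 (EReal.le_coe_toReal h)⟩, ?_⟩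
  rintro ⟨β, hβ⟩
  exact ne_top_of_le_ne_top (EReal.coe_ne_top β) (conj_le_coe_iff.2 hβ)

lemma IsAffineMinorant.convex_combination {u u' : H} {β β' a b : ℝ} (h : IsAffineMinorant f u β)
    (h' : IsAffineMinorant f u' β') (ha : 0 ≤ a) (hb : 0 ≤ b) (hab : a + b = 1) :
    IsAffineMinorant f (a • u + b • u') (a * β + b * β') := by
  intro y
  refine EReal.le_of_forall_lt_iff_le.1 fun ρ hρ => ?_
  have h₁ := EReal.coe_le_coe_iff.1 ((h y).trans hρ.le)
  have h₂ := EReal.coe_le_coe_iff.1 ((h' y).trans hρ.le)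
  rw [inner_add_right, real_inner_smul_right, real_inner_smul_right, EReal.coe_le_coe_iff]
  have hρ_eq : a * ρ + b * ρ = ρ := by rw [← add_mul, hab, one_mul]
  linarith [mul_le_mul_of_nonneg_left h₁ ha, mul_le_mul_of_nonneg_left h₂ hb]

lemma convex_setOf_conj_ne_top (f : H → EReal) : Convex ℝ {u | conj f u ≠ ⊤} := by
  intro u hu u' hu' a b ha hb hab
  obtain ⟨β, hβ⟩ := conj_ne_top_iff.1 hu
  obtain ⟨β', hβ'⟩ := conj_ne_top_iff.1 hu'
  exact conj_ne_top_iff.2 ⟨_, hβ.convex_combination hβ' ha hb hab⟩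

lemma persp_ge_of_conj_le {x0 w : H} {s : ℝ} (hs : conj f w ≤ s) (y : H) {t : ℝ} (ht : 0 < t) :
    ((⟪y, w⟫_ℝ - t * s : ℝ) : EReal) ≤ persp f x0 (y, t) := by
  have h := mul_le_mul_of_nonneg_left (conj_le_coe_iff.1 hs (t⁻¹ • y))
    (show (0 : EReal) ≤ t by exact_mod_cast ht.le)
  rw [← EReal.coe_mul, real_inner_smul_left] at h
  simp only [persp, ht, if_true]
  convert h using 2
  field_simp

lemma IsProjE.inner_le_zero {C : Set H} (hC : Convex ℝ C) {z w : H} (hw : IsProjE C z w)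
    {u : H} (hu : u ∈ C) : ⟪z - w, u - w⟫_ℝ ≤ 0 := by
  have : Nonempty C := ⟨⟨w, hw.1⟩⟩
  refine (norm_eq_iInf_iff_real_inner_le_zero hC hw.1).1 (le_antisymm ?_ ?_) u hu
  · exact le_ciInf fun q => hw.2 q q.2
  · exact ciInf_le (f := fun q : C => ‖z - q‖) ⟨0, Set.forall_mem_range.2 fun _ => norm_nonneg _⟩
      ⟨w, hw.1⟩

variable [CompleteSpace H]

lemma Gamma0.exists_isAffineMinorant_gt (hf : Gamma0 f) {v : H} {α : ℝ} (hv : ¬ f v ≤ α) :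
    ∃ u β, IsAffineMinorant f u β ∧ α < ⟪v, u⟫_ℝ - β := by
  obtain ⟨ℓ, s, c, hs, hv, hsep⟩ := hf.exists_nonvertical_separation hv
  set u := (InnerProductSpace.toDual ℝ H).symm (-s⁻¹ • ℓ)
  have hu (y : H) : ⟪y, u⟫_ℝ - -(c / s) = (c - ℓ y) / s := by
    rw [real_inner_comm, InnerProductSpace.toDual_symm_apply]
    simp only [smul_apply, smul_eq_mul]
    field_simp
    ring
  refine ⟨u, -(c / s), fun y => EReal.le_of_forall_lt_iff_le.1 fun ρ hρ => ?_, ?_⟩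
  · rw [hu, EReal.coe_le_coe_iff, div_le_iff₀ hs]
    linarith [hsep y ρ hρ.le]
  · rw [hu, lt_div_iff₀ hs]
    linarith

lemma Gamma0.recFn_le_of_forall_inner_le (hf : Gamma0 f) {x0 : H} (hx0 : f x0 ≠ ⊤) {d : H}
    {c : ℝ} (hc : ∀ u, conj f u ≠ ⊤ → ⟪u, d⟫_ℝ ≤ c) : recFn f x0 d ≤ c := by
  set F0 := (f x0).toReal
  have hF0 : f x0 = F0 := (EReal.coe_toReal hx0 (hf.2.1 x0)).symm
  refine iSup₂_le fun t (ht : 0 < t) => ?_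
  have hle : f (x0 + t • d) ≤ ((F0 + t * c : ℝ) : EReal) := by
    by_contra hv
    obtain ⟨u, β, hu, hgt⟩ := hf.exists_isAffineMinorant_gt hv
    have hud : ⟪d, u⟫_ℝ ≤ c := real_inner_comm u d ▸ hc u (conj_ne_top_iff.2 ⟨β, hu⟩)
    have hx0u : ⟪x0, u⟫_ℝ - β ≤ F0 := EReal.coe_le_coe_iff.1 (hF0 ▸ hu x0)
    rw [inner_add_left, real_inner_smul_left] at hgt
    nlinarith [mul_le_mul_of_nonneg_left hud ht.le]
  calc (f (x0 + t • d) - f x0) * ((t⁻¹ : ℝ) : EReal)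
      ≤ (((F0 + t * c : ℝ) : EReal) - F0) * ((t⁻¹ : ℝ) : EReal) :=
        mul_le_mul_of_nonneg_right (EReal.sub_le_sub hle hF0.ge)
          (by exact_mod_cast (inv_pos.2 ht).le)
    _ = c := by
        rw [← EReal.coe_sub, ← EReal.coe_mul, EReal.coe_eq_coe_iff]
        field_simp
        ring

lemma Gamma0.recFn_le_inner_of_isProjE (hf : Gamma0 f) {x0 : H} (hx0 : f x0 ≠ ⊤) {μ : ℝ}
    (hμ : 0 < μ) {x w : H} (hw : IsProjE (closure {u | conj f u ≠ ⊤}) (μ⁻¹ • x) w) :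
    recFn f x0 (x - μ • w) ≤ (⟪w, x - μ • w⟫_ℝ : ℝ) := by
  refine hf.recFn_le_of_forall_inner_le hx0 fun u hu => ?_
  have h := hw.inner_le_zero (convex_setOf_conj_ne_top f).closure (subset_closure hu)
  rw [inner_sub_right, real_inner_comm u, real_inner_comm w] at h
  rw [← smul_inv_smul₀ hμ.ne' x, ← smul_sub, real_inner_smul_right, real_inner_smul_right]
  exact mul_le_mul_of_nonneg_left (by linarith) hμ.le

end Conjugate

lemma EReal.le_neg_div_of_add_mul_nonpos {η μ : ℝ} (hμ : 0 < μ) {c : EReal}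
    (h : (η : EReal) + μ * c ≤ 0) : c ≤ ((-η / μ : ℝ) : EReal) := by
  induction c using EReal.rec with
  | bot => exact bot_le
  | coe c =>
      rw [← EReal.coe_mul, ← EReal.coe_add, ← EReal.coe_zero, EReal.coe_le_coe_iff] at h
      rw [EReal.coe_le_coe_iff, le_div_iff₀ hμ]
      linarith
  | top => simp [EReal.coe_mul_top_of_pos hμ] at h

lemma IsProxE.of_smul {E : Type*} [NormedAddCommGroup E] {g : E → EReal} {μ : ℝ} (hμ : 0 < μ)
    {z p : E} (h : IsProxE (fun y => (μ : EReal) * g y) 1 z p) : IsProxE g μ z p := by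
  have hμ' : (0 : EReal) ≤ ((μ⁻¹ : ℝ) : EReal) := by exact_mod_cast (inv_pos.2 hμ).le
  have key (a : EReal) (q : ℝ) :
      ((μ⁻¹ : ℝ) : EReal) * ((μ : EReal) * a + ((q / (2 * 1) : ℝ) : EReal)) =
        a + ((q / (2 * μ) : ℝ) : EReal) := by
    rw [EReal.left_distrib_of_nonneg_of_ne_top hμ' (EReal.coe_ne_top _), ← mul_assoc,
      ← EReal.coe_mul, inv_mul_cancel₀ hμ.ne', EReal.coe_one, one_mul, ← EReal.coe_mul]
    congr 2
    field_simp
  intro y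
  simpa only [key] using mul_le_mul_of_nonneg_left (h y) hμ'

section Prox

variable {H : Type*} [NormedAddCommGroup H] [InnerProductSpace ℝ H]

lemma IsProxE.add_le_of_le_inner {g : H → EReal} {μ : ℝ} {x r w : H} (hr : IsProxE g μ x r)
    (hg : g (x - μ • w) ≤ (⟪w, x - μ • w⟫_ℝ : ℝ)) :
    g r + ((‖x - r‖ ^ 2 / (2 * μ) : ℝ) : EReal) ≤ ((⟪w, x⟫_ℝ - μ * ‖w‖ ^ 2 / 2 : ℝ) : EReal) :=
  calc _ ≤ g (x - μ • w) + ((‖x - (x - μ • w)‖ ^ 2 / (2 * μ) : ℝ) : EReal) := hr _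
    _ ≤ ((⟪w, x - μ • w⟫_ℝ : ℝ) : EReal) + ((‖x - (x - μ • w)‖ ^ 2 / (2 * μ) : ℝ) : EReal) := by
        gcongr
    _ = _ := by
        rw [← EReal.coe_add, EReal.coe_eq_coe_iff, sub_sub_cancel, norm_smul, mul_pow,
          Real.norm_eq_abs, sq_abs, inner_sub_right, real_inner_smul_right,
          real_inner_self_eq_norm_sq]
        rcases eq_or_ne μ 0 with rfl | hμ
        · simp
        · field_simp
          ring

lemma inner_sub_norm_sq_div_le (x y w : H) {μ : ℝ} (hμ : 0 < μ) (η t : ℝ) :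
    ⟪w, x⟫_ℝ - μ * ‖w‖ ^ 2 / 2 + η ^ 2 / (2 * μ) ≤
      ⟪y, w⟫_ℝ - t * (-η / μ) + ‖x - y‖ ^ 2 / (2 * μ) + (η - t) ^ 2 / (2 * μ) := by
  have hsq : ‖x - y - μ • w‖ ^ 2 =
      ‖x - y‖ ^ 2 - 2 * μ * (⟪w, x⟫_ℝ - ⟪y, w⟫_ℝ) + μ ^ 2 * ‖w‖ ^ 2 := by
    rw [norm_sub_sq_real, inner_smul_right, inner_sub_left, norm_smul, real_inner_comm x,
      Real.norm_of_nonneg hμ.le]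
    ring
  have hgap : ⟪y, w⟫_ℝ - t * (-η / μ) + ‖x - y‖ ^ 2 / (2 * μ) + (η - t) ^ 2 / (2 * μ) -
      (⟪w, x⟫_ℝ - μ * ‖w‖ ^ 2 / 2 + η ^ 2 / (2 * μ)) = (‖x - y - μ • w‖ ^ 2 + t ^ 2) / (2 * μ) := by
    rw [hsq]
    field_simp
    ring
  have : 0 ≤ (‖x - y - μ • w‖ ^ 2 + t ^ 2) / (2 * μ) := by positivity
  linarith

end Prox

theorem stmt8 {H : Type*} [NormedAddCommGroup H] [InnerProductSpace ℝ H] [CompleteSpace H]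
    (f : H → EReal) (hf : Gamma0 f) (x0 : H) (hx0 : f x0 ≠ ⊤)
    (μ : ℝ) (hμ : 0 < μ) (x : H) (η : ℝ) (w : H)
    (hw : IsProjE (closure {u : H | conj f u ≠ ⊤}) (μ⁻¹ • x) w)
    (hcond : (η : EReal) + (μ : EReal) * conj f w ≤ 0)
    (r : H) (hr : IsProxE (fun y => (μ : EReal) * recFn f x0 y) 1 x r) :
    IsProx2 (persp f x0) μ (x, η) (r, 0) ∧
      persp f x0 (r, 0) = recFn f x0 r := by
  have hprox := hr.of_smul hμ
  have hkey := hprox.add_le_of_le_inner (hf.recFn_le_inner_of_isProjE hx0 hμ hw)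
  have hs := EReal.le_neg_div_of_add_mul_nonpos hμ hcond
  have hpersp : persp f x0 (r, 0) = recFn f x0 r := by simp [persp]
  refine ⟨fun ⟨y, t⟩ => ?_, hpersp⟩
  simp only [hpersp, sub_zero, add_div, EReal.coe_add, ← add_assoc]
  rcases lt_trichotomy t 0 with ht | rfl | ht
  · simp [persp, ht.not_gt, ht.ne]
  · simpa [persp] using add_le_add_left (hprox y) _
  · calc _ ≤ ((⟪w, x⟫_ℝ - μ * ‖w‖ ^ 2 / 2 : ℝ) : EReal) + ((η ^ 2 / (2 * μ) : ℝ) : EReal) := by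
          gcongr
      _ ≤ ((⟪y, w⟫_ℝ - t * (-η / μ) : ℝ) : EReal) + ((‖x - y‖ ^ 2 / (2 * μ) : ℝ) : EReal) +
            (((η - t) ^ 2 / (2 * μ) : ℝ) : EReal) := by
          simp only [← EReal.coe_add, EReal.coe_le_coe_iff]
          exact inner_sub_norm_sq_div_le x y w hμ η t
      _ ≤ _ := by
          gcongr
          exact persp_ge_of_conj_le hs y ht
end
end

section
/- Let f ∈ Γ₀(H), μ > 0, and (x,η) ∈ H × ℝ with η + μ f*(P_{cl(dom f*)}(x/μ)) > 0. Then there exists a unique ν ∈ (0, η + μ f*(P_{cl(dom f*)}(x/μ))] satisfying ν = η + μ f*(prox_{(ν/μ) f*}(x/μ)), and for this ν one has prox_{μ f̃}(x,η) = (ν · prox_{(μ/ν) f}(x/ν), ν) and f̃(prox_{μ f̃}(x,η)) = ν · f(prox_{(μ/ν) f}(x/ν)). -/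
open scoped Classical
open Filter Set Topology

noncomputable section

section Helpers
-- note
variable {E : Type*} [NormedAddCommGroup E] [InnerProductSpace ℝ E]

lemma term_le_conj (f : E → EReal) (x u : E) :
    ((inner ℝ x u : ℝ) : EReal) - f x ≤ conj f u :=
  le_iSup (fun x : E => ((inner ℝ x u : ℝ) : EReal) - f x) x

lemma coe_term_le_conj {f : E → EReal} {x : E} {c : ℝ} (hx : f x = (c : EReal)) (u : E) :
    ((inner ℝ x u - c : ℝ) : EReal) ≤ conj f u := by
  have h := term_le_conj f x u
  rwa [hx, ← EReal.coe_sub] at h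

lemma conj_ne_bot {f : E → EReal} {x : E} {c : ℝ} (hx : f x = (c : EReal)) (u : E) :
    conj f u ≠ ⊥ := by
  intro h
  have := coe_term_le_conj hx u
  rw [h, le_bot_iff] at this
  exact EReal.coe_ne_bot _ this

lemma conj_lsc (f : E → EReal) : LowerSemicontinuous (conj f) := by
  apply lowerSemicontinuous_iSup
  intro x
  by_cases hb : f x = ⊥
  · have : (fun u : E => ((inner ℝ x u : ℝ) : EReal) - f x) = fun _ => ⊤ := by
      funext u; rw [hb, EReal.coe_sub_bot]
    rw [this]; exact lowerSemicontinuous_const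
  by_cases ht : f x = ⊤
  · have : (fun u : E => ((inner ℝ x u : ℝ) : EReal) - f x) = fun _ => ⊥ := by
      funext u; rw [ht, EReal.sub_top]
    rw [this]; exact lowerSemicontinuous_const
  · obtain ⟨c, hc⟩ : ∃ c : ℝ, f x = (c : EReal) := ⟨_, (EReal.coe_toReal ht hb).symm⟩
    have : (fun u : E => ((inner ℝ x u : ℝ) : EReal) - f x) =
        fun u => (((inner ℝ x u - c : ℝ)) : EReal) := by
      funext u; rw [hc, EReal.coe_sub]
    rw [this]
    exact (continuous_coe_real_ereal.comp ((continuous_const.inner continuous_id).sub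
      continuous_const)).lowerSemicontinuous

lemma conj_midpoint {f : E → EReal} (hbot : ∀ x, f x ≠ ⊥)
    {u v : E} {a b : ℝ} (hu : conj f u ≤ (a : EReal)) (hv : conj f v ≤ (b : EReal)) :
    conj f ((2:ℝ)⁻¹ • (u + v)) ≤ (((a + b) / 2 : ℝ) : EReal) := by
  apply iSup_le
  intro x
  by_cases hx : f x = ⊤
  · rw [hx, EReal.sub_top]; exact bot_le
  · have hc : f x = (((f x).toReal : ℝ) : EReal) := (EReal.coe_toReal hx (hbot x)).symm
    set c := (f x).toReal
    have h1 : (inner ℝ x u - c : ℝ) ≤ a := by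
      have := (coe_term_le_conj hc u).trans hu; exact_mod_cast this
    have h2 : (inner ℝ x v - c : ℝ) ≤ b := by
      have := (coe_term_le_conj hc v).trans hv; exact_mod_cast this
    rw [hc, ← EReal.coe_sub, EReal.coe_le_coe_iff]
    have h3 : (inner ℝ x ((2:ℝ)⁻¹ • (u + v)) : ℝ) = 2⁻¹ * (inner ℝ x u + inner ℝ x v) := by
      rw [real_inner_smul_right, inner_add_right]
    rw [h3]; linarith

lemma conj_of_subgrad {f : E → EReal} (hbot : ∀ x, f x ≠ ⊥) {v u : E} {a : ℝ}
    (hv : f v = (a : EReal))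
    (hsub : ∀ y : E, ((inner ℝ (y - v) u : ℝ) : EReal) + f v ≤ f y) :
    conj f u = ((inner ℝ v u - a : ℝ) : EReal) := by
  refine le_antisymm (iSup_le fun y => ?_) (coe_term_le_conj hv u)
  by_cases hy : f y = ⊤
  · rw [hy, EReal.sub_top]; exact bot_le
  · have hd : f y = (((f y).toReal : ℝ) : EReal) := (EReal.coe_toReal hy (hbot y)).symm
    set d := (f y).toReal
    have h := hsub y
    rw [hv, hd, ← EReal.coe_add, EReal.coe_le_coe_iff] at h
    rw [hd, ← EReal.coe_sub, EReal.coe_le_coe_iff]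
    have h5 : (inner ℝ (y - v) u : ℝ) = inner ℝ y u - inner ℝ v u := by rw [inner_sub_left]
    rw [h5] at h; linarith

lemma le_of_forall_Ioc {a b c : ℝ} (hc : 0 ≤ c)
    (h : ∀ t : ℝ, 0 < t → t ≤ 1 → a ≤ b + t * c) : a ≤ b := by
  by_contra hab
  push_neg at hab
  have ht0 : 0 < min 1 ((a - b) / (2 * (c + 1))) :=
    lt_min one_pos (div_pos (by linarith) (by linarith))
  have hle := h _ ht0 (min_le_left _ _)
  have h2 : min 1 ((a - b) / (2 * (c + 1))) ≤ (a - b) / (2 * (c + 1)) := min_le_right _ _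
  have hkey : (a - b) / (2 * (c + 1)) * c ≤ (a - b) / 2 := by
    rw [div_mul_eq_mul_div, div_le_div_iff₀ (by linarith) (by norm_num)]
    nlinarith
  have := mul_le_mul_of_nonneg_right h2 hc
  linarith

lemma prox_subgrad {g : E → EReal}
    (hconv : ∀ x y : E, ∀ a b : ℝ, 0 ≤ a → 0 ≤ b → a + b = 1 →
      g (a • x + b • y) ≤ (a : EReal) * g x + (b : EReal) * g y)
    {γ : ℝ} (hγ : 0 < γ) {z p : E} (hp : IsProxE g γ z p)
    {c : ℝ} (hgp : g p = (c : EReal)) {y : E} {d : ℝ} (hgy : g y = (d : EReal)) :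
    inner ℝ (y - p) (z - p) / γ + c ≤ d := by
  set I : ℝ := inner ℝ (z - p) (y - p) with hI
  set N : ℝ := ‖y - p‖ ^ 2 with hN
  have h2γ : (0:ℝ) < 2 * γ := by linarith
  have key : ∀ t : ℝ, 0 < t → t ≤ 1 →
      inner ℝ (y - p) (z - p) / γ + c ≤ d + t * (N / (2 * γ)) := by
    intro t ht0 ht1
    have hw : g ((1 - t) • p + t • y) ≤ (((1 - t) * c + t * d : ℝ) : EReal) := by
      have := hconv p y (1 - t) t (by linarith) (le_of_lt ht0) (by ring)
      rw [hgp, hgy, ← EReal.coe_mul, ← EReal.coe_mul, ← EReal.coe_add] at this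
      exact this
    have hprox := hp ((1 - t) • p + t • y)
    rw [hgp] at hprox
    have hprox2 : ((c + ‖z - p‖ ^ 2 / (2 * γ) : ℝ) : EReal) ≤
        ((((1 - t) * c + t * d) + ‖z - ((1 - t) • p + t • y)‖ ^ 2 / (2 * γ) : ℝ) : EReal) := by
      rw [EReal.coe_add, EReal.coe_add]
      exact hprox.trans (add_le_add hw le_rfl)
    rw [EReal.coe_le_coe_iff] at hprox2
    have hnorm : ‖z - ((1 - t) • p + t • y)‖ ^ 2 =
        ‖z - p‖ ^ 2 - 2 * t * I + t ^ 2 * N := by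
      have hzw : z - ((1 - t) • p + t • y) = (z - p) - t • (y - p) := by
        rw [smul_sub, sub_smul, one_smul]; abel
      rw [hzw, norm_sub_sq_real, real_inner_smul_right, norm_smul]
      simp only [Real.norm_eq_abs, mul_pow, sq_abs]
      rw [hI, hN]; ring
    rw [hnorm] at hprox2
    have hm := mul_le_mul_of_nonneg_right hprox2 (le_of_lt h2γ)
    have hm2 : c * (2 * γ) + ‖z - p‖ ^ 2 ≤
        ((1 - t) * c + t * d) * (2 * γ) + (‖z - p‖ ^ 2 - 2 * t * I + t ^ 2 * N) := by
      have e1 : (c + ‖z - p‖ ^ 2 / (2 * γ)) * (2 * γ) = c * (2 * γ) + ‖z - p‖ ^ 2 := by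
        field_simp
      have e2 : (((1 - t) * c + t * d) + (‖z - p‖ ^ 2 - 2 * t * I + t ^ 2 * N) / (2 * γ)) * (2 * γ)
          = ((1 - t) * c + t * d) * (2 * γ) + (‖z - p‖ ^ 2 - 2 * t * I + t ^ 2 * N) := by
        field_simp
      rw [e1, e2] at hm
      exact hm
    have h5 : t * (2 * I) ≤ t * (2 * γ * (d - c) + t * N) := by nlinarith
    have h6 : 2 * I ≤ 2 * γ * (d - c) + t * N := le_of_mul_le_mul_left h5 ht0
    have hip : (inner ℝ (y - p) (z - p) : ℝ) = I := real_inner_comm _ _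
    rw [hip]
    calc I / γ + c = (2 * I + 2 * γ * c) / (2 * γ) := by field_simp
      _ ≤ (2 * γ * d + t * N) / (2 * γ) := by
          rw [div_le_div_iff₀ h2γ h2γ]; nlinarith
      _ = d + t * (N / (2 * γ)) := by field_simp
  exact le_of_forall_Ioc (by positivity : (0:ℝ) ≤ N / (2 * γ)) key

lemma subgrad_prox {g : E → EReal} {γ : ℝ} (hγ : 0 < γ) {z p : E} {c : ℝ}
    (hgp : g p = (c : EReal))
    (hsub : ∀ y, ((c + inner ℝ (y - p) (z - p) / γ : ℝ) : EReal) ≤ g y) :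
    IsProxE g γ z p := by
  intro y
  by_cases hyb : g y = ⊥
  · exfalso
    have := hsub y
    rw [hyb, le_bot_iff] at this
    exact EReal.coe_ne_bot _ this
  by_cases hyt : g y = ⊤
  · rw [hyt, EReal.top_add_of_ne_bot (EReal.coe_ne_bot _)]; exact le_top
  · obtain ⟨d, hy⟩ : ∃ d : ℝ, g y = (d : EReal) := ⟨_, (EReal.coe_toReal hyt hyb).symm⟩
    rw [hy]
    have h := hsub y
    rw [hy, EReal.coe_le_coe_iff] at h
    rw [hgp, ← EReal.coe_add, ← EReal.coe_add, EReal.coe_le_coe_iff]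
    set I : ℝ := inner ℝ (z - p) (y - p) with hI
    set N : ℝ := ‖y - p‖ ^ 2 with hN
    have h2γ : (0:ℝ) < 2 * γ := by linarith
    have hnorm : ‖z - y‖ ^ 2 = ‖z - p‖ ^ 2 - 2 * I + N := by
      have hzy : z - y = (z - p) - (y - p) := by abel
      rw [hzy, norm_sub_sq_real]
    have hip : (inner ℝ (y - p) (z - p) : ℝ) = I := real_inner_comm _ _
    rw [hip] at h
    have hXY : ‖z - p‖ ^ 2 / (2 * γ) = ‖z - y‖ ^ 2 / (2 * γ) + (2 * I - N) / (2 * γ) := by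
      rw [← add_div]; congr 1; rw [hnorm]; ring
    have h8 : (2 * I - N) / (2 * γ) ≤ I / γ := by
      rw [div_le_div_iff₀ h2γ hγ]
      have : (0:ℝ) ≤ N := by rw [hN]; positivity
      nlinarith
    linarith


lemma EReal.le_coe_sub_of_add {a : EReal} {r s : ℝ} (h : a + (r : EReal) ≤ (s : EReal)) :
    a ≤ ((s - r : ℝ) : EReal) := by
  by_cases hb : a = ⊥
  · rw [hb]; exact bot_le
  by_cases ht : a = ⊤
  · rw [ht, EReal.top_add_of_ne_bot (EReal.coe_ne_bot _), top_le_iff] at h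
    exact absurd h (EReal.coe_ne_top _)
  · obtain ⟨c, hc⟩ : ∃ c : ℝ, a = (c : EReal) := ⟨_, (EReal.coe_toReal ht hb).symm⟩
    rw [hc, ← EReal.coe_add, EReal.coe_le_coe_iff] at h
    rw [hc, EReal.coe_le_coe_iff]
    linarith

lemma exists_prox {F : Type*} [NormedAddCommGroup F] [InnerProductSpace ℝ F] [CompleteSpace F]
    (g : F → EReal)
    (hmid : ∀ u v : F, ∀ a b : ℝ, g u ≤ (a : EReal) → g v ≤ (b : EReal) →
      g ((2:ℝ)⁻¹ • (u + v)) ≤ (((a + b) / 2 : ℝ) : EReal))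
    (hlsc : LowerSemicontinuous g)
    (hminor : ∃ (a0 : F) (c0 : ℝ), ∀ u, ((inner ℝ a0 u - c0 : ℝ) : EReal) ≤ g u)
    (hproper : ∃ (u₀ : F) (r₀ : ℝ), g u₀ ≤ (r₀ : EReal))
    {γ : ℝ} (hγ : 0 < γ) (z : F) :
    ∃ p : F, IsProxE g γ z p ∧ ∃ cp : ℝ, g p = (cp : EReal) := by
  obtain ⟨u₀, r₀, hu₀⟩ := hproper
  obtain ⟨a0, c0, hminor⟩ := hminor
  have h2γ : (0:ℝ) < 2 * γ := by linarith
  have hgbot : ∀ u, g u ≠ ⊥ := by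
    intro u h
    have := hminor u
    rw [h, le_bot_iff] at this
    exact EReal.coe_ne_bot _ this
  set A : Set ℝ := {t | ∃ y : F, g y + ((‖z - y‖ ^ 2 / (2 * γ) : ℝ) : EReal) ≤ (t : EReal)}
    with hA
  have hAne : (r₀ + ‖z - u₀‖ ^ 2 / (2 * γ)) ∈ A := by
    refine ⟨u₀, ?_⟩
    rw [EReal.coe_add]
    exact add_le_add hu₀ le_rfl
  have hbd : ∀ t ∈ A, inner ℝ a0 z - c0 - γ * ‖a0‖ ^ 2 / 2 ≤ t := by
    rintro t ⟨y, hy⟩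
    have h1 : ((inner ℝ a0 y - c0 + ‖z - y‖ ^ 2 / (2 * γ) : ℝ) : EReal) ≤ (t : EReal) := by
      rw [EReal.coe_add]
      exact le_trans (add_le_add (hminor y) le_rfl) hy
    rw [EReal.coe_le_coe_iff] at h1
    have h2 : (inner ℝ a0 (z - y) : ℝ) ≤ ‖a0‖ * ‖z - y‖ := real_inner_le_norm _ _
    have h3 : (inner ℝ a0 y : ℝ) = inner ℝ a0 z - inner ℝ a0 (z - y) := by
      rw [inner_sub_right]; ring
    rw [h3] at h1
    have h7 : (‖a0‖ * ‖z - y‖ - ‖z - y‖ ^ 2 / (2 * γ)) * (2 * γ) ≤ (γ * ‖a0‖ ^ 2 / 2) * (2 * γ) := by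
      have e : (‖a0‖ * ‖z - y‖ - ‖z - y‖ ^ 2 / (2 * γ)) * (2 * γ)
          = 2 * γ * ‖a0‖ * ‖z - y‖ - ‖z - y‖ ^ 2 := by field_simp
      have e2 : (γ * ‖a0‖ ^ 2 / 2) * (2 * γ) = γ ^ 2 * ‖a0‖ ^ 2 := by field_simp
      rw [e, e2]; nlinarith [sq_nonneg (‖z - y‖ - γ * ‖a0‖)]
    have h8 := le_of_mul_le_mul_right h7 h2γ
    linarith
  have hAbdd : BddBelow A := ⟨_, fun t ht => hbd t ht⟩
  set m : ℝ := sInf A with hm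
  have hm_le : ∀ y : F, (m : EReal) ≤ g y + ((‖z - y‖ ^ 2 / (2 * γ) : ℝ) : EReal) := by
    intro y
    by_cases hyt : g y = ⊤
    · rw [hyt, EReal.top_add_of_ne_bot (EReal.coe_ne_bot _)]; exact le_top
    · obtain ⟨d, hd⟩ : ∃ d : ℝ, g y = (d : EReal) := ⟨_, (EReal.coe_toReal hyt (hgbot y)).symm⟩
      have hdA : (d + ‖z - y‖ ^ 2 / (2 * γ)) ∈ A := ⟨y, by rw [hd, EReal.coe_add]⟩
      have hmle := csInf_le hAbdd hdA
      rw [hd, ← EReal.coe_add, EReal.coe_le_coe_iff]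
      exact hmle
  have hseq : ∀ n : ℕ, ∃ y : F,
      g y + ((‖z - y‖ ^ 2 / (2 * γ) : ℝ) : EReal) ≤ ((m + 1 / (n + 1) : ℝ) : EReal) := by
    intro n
    have hlt : sInf A < m + 1 / (n + 1) := by
      rw [← hm]
      have : (0:ℝ) < 1 / (n + 1) := by positivity
      linarith
    obtain ⟨t, htA, htlt⟩ := exists_lt_of_csInf_lt ⟨_, hAne⟩ hlt
    obtain ⟨y, hy⟩ := htA
    exact ⟨y, hy.trans (by rw [EReal.coe_le_coe_iff]; linarith)⟩
  choose y hy using hseq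
  have hyR : ∀ n, ∃ Gn : ℝ, g (y n) = (Gn : EReal) := by
    intro n
    have h1 : g (y n) ≤ ((m + 1 / (n + 1) - ‖z - y n‖ ^ 2 / (2 * γ) : ℝ) : EReal) :=
      EReal.le_coe_sub_of_add (hy n)
    have h2 : g (y n) ≠ ⊤ := fun h => by
      rw [h, top_le_iff] at h1; exact EReal.coe_ne_top _ h1
    exact ⟨_, (EReal.coe_toReal h2 (hgbot (y n))).symm⟩
  choose G hG using hyR
  have hGle : ∀ n, G n + ‖z - y n‖ ^ 2 / (2 * γ) ≤ m + 1 / (n + 1) := by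
    intro n
    have h1 := hy n
    rw [hG n, ← EReal.coe_add, EReal.coe_le_coe_iff] at h1
    exact h1
  have hcauchy_est : ∀ n k : ℕ, ‖y n - y k‖ ^ 2 ≤ 4 * γ * (1 / (n + 1) + 1 / (k + 1)) := by
    intro n k
    have hmidle := hmid (y n) (y k) (G n) (G k) (le_of_eq (hG n)) (le_of_eq (hG k))
    have hmge := hm_le ((2:ℝ)⁻¹ • (y n + y k))
    have hmid2 : m ≤ (G n + G k) / 2 + ‖z - (2:ℝ)⁻¹ • (y n + y k)‖ ^ 2 / (2 * γ) := by
      have := hmge.trans (add_le_add hmidle le_rfl)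
      rw [← EReal.coe_add, EReal.coe_le_coe_iff] at this
      exact this
    have hpar : ‖z - (2:ℝ)⁻¹ • (y n + y k)‖ ^ 2 =
        (2 * (‖z - y n‖ ^ 2 + ‖z - y k‖ ^ 2) - ‖y n - y k‖ ^ 2) / 4 := by
      have hid : z - (2:ℝ)⁻¹ • (y n + y k) = (2:ℝ)⁻¹ • ((z - y n) + (z - y k)) := by module
      have hab : ‖(z - y n) - (z - y k)‖ = ‖y n - y k‖ := by
        rw [← norm_neg]; congr 1; abel
      have hpl2 : ‖z - y n + (z - y k)‖ ^ 2 + ‖y n - y k‖ ^ 2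
          = 2 * (‖z - y n‖ ^ 2 + ‖z - y k‖ ^ 2) := by
        have hpl := parallelogram_law_with_norm ℝ (z - y n) (z - y k)
        rw [hab] at hpl
        simp only [pow_two]
        linarith [hpl]
      rw [hid, norm_smul]
      simp only [Real.norm_eq_abs, abs_of_pos (by norm_num : (0:ℝ) < (2:ℝ)⁻¹)]
      nlinarith [hpl2]
    rw [hpar] at hmid2
    have hq1 := hGle n
    have hq2 := hGle k
    have hexp : (2 * (‖z - y n‖ ^ 2 + ‖z - y k‖ ^ 2) - ‖y n - y k‖ ^ 2) / 4 / (2 * γ)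
        = ‖z - y n‖ ^ 2 / (2 * γ) / 2 + ‖z - y k‖ ^ 2 / (2 * γ) / 2
          - ‖y n - y k‖ ^ 2 / (8 * γ) := by field_simp; ring
    rw [hexp] at hmid2
    have h9 : ‖y n - y k‖ ^ 2 / (8 * γ) ≤ 1 / (n + 1) / 2 + 1 / (k + 1) / 2 := by linarith
    have h10 := mul_le_mul_of_nonneg_right h9 (show (0:ℝ) ≤ 8 * γ by linarith)
    have e3 : ‖y n - y k‖ ^ 2 / (8 * γ) * (8 * γ) = ‖y n - y k‖ ^ 2 := by
      field_simp
    rw [e3] at h10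
    nlinarith [h10]
  have hcs : CauchySeq y := by
    rw [Metric.cauchySeq_iff']
    intro ε hε
    obtain ⟨N, hN⟩ := exists_nat_gt (8 * γ / ε ^ 2)
    refine ⟨N, fun n hn => ?_⟩
    have h1 := hcauchy_est n N
    have h2 : (1:ℝ) / (n + 1) ≤ 1 / (N + 1) := by
      apply one_div_le_one_div_of_le (by positivity)
      have : (N:ℝ) ≤ n := by exact_mod_cast hn
      linarith
    have h3 : ‖y n - y N‖ ^ 2 ≤ 8 * γ * (1 / ((N:ℝ) + 1)) := by
      nlinarith [mul_le_mul_of_nonneg_left h2 (show (0:ℝ) ≤ 4 * γ by linarith)]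
    have h4 : 8 * γ * (1 / ((N:ℝ) + 1)) < ε ^ 2 := by
      rw [mul_one_div, div_lt_iff₀ (by positivity)]
      have hN2 := (div_lt_iff₀ (by positivity : (0:ℝ) < ε ^ 2)).mp hN
      nlinarith [sq_nonneg ε]
    by_contra hcon
    push_neg at hcon
    have h5 := mul_self_le_mul_self (le_of_lt hε) hcon
    rw [dist_eq_norm] at h5
    nlinarith [h5]
  obtain ⟨p, hp⟩ := cauchySeq_tendsto_of_complete hcs
  set qp : ℝ := ‖z - p‖ ^ 2 / (2 * γ) with hqp
  have hgp : g p ≤ ((m - qp : ℝ) : EReal) := by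
    by_contra hcon
    push_neg at hcon
    obtain ⟨r, hr1, hr2⟩ := EReal.exists_between_coe_real hcon
    have hev : ∀ᶠ n in atTop, (r : EReal) < g (y n) := hp.eventually (hlsc p _ hr2)
    have hevR : ∀ᶠ n in atTop, r ≤ m + 1 / (n + 1) - ‖z - y n‖ ^ 2 / (2 * γ) := by
      filter_upwards [hev] with n hn
      rw [hG n, EReal.coe_lt_coe_iff] at hn
      have := hGle n
      linarith
    have htend : Tendsto (fun n : ℕ => m + 1 / ((n:ℝ) + 1) - ‖z - y n‖ ^ 2 / (2 * γ))
        atTop (𝓝 (m + 0 - qp)) := by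
      apply Tendsto.sub
      · exact tendsto_const_nhds.add tendsto_one_div_add_atTop_nhds_zero_nat
      · exact ((tendsto_const_nhds.sub hp).norm.pow 2).div_const (2 * γ)
    have hrle : r ≤ m + 0 - qp := ge_of_tendsto htend hevR
    rw [EReal.coe_lt_coe_iff] at hr1
    linarith
  have hptop : g p ≠ ⊤ := fun h => by
    rw [h, top_le_iff] at hgp; exact absurd hgp (EReal.coe_ne_top _)
  refine ⟨p, fun y' => ?_, ⟨_, (EReal.coe_toReal hptop (hgbot p)).symm⟩⟩
  have h1 : g p + ((‖z - p‖ ^ 2 / (2 * γ) : ℝ) : EReal) ≤ (m : EReal) := by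
    have := add_le_add hgp (le_refl ((qp : ℝ) : EReal))
    rw [← EReal.coe_add] at this
    have e : m - qp + qp = m := by ring
    rw [e] at this
    exact this
  exact h1.trans (hm_le y')




lemma EReal.coe_mul_le_of_le {μ t : ℝ} {a : EReal} (hμ : 0 < μ) (h : a ≤ (t : EReal)) :
    (μ : EReal) * a ≤ ((μ * t : ℝ) : EReal) := by
  by_cases hb : a = ⊥
  · rw [hb, EReal.mul_bot_of_pos (by exact_mod_cast hμ : (0:EReal) < (μ:EReal))]
    exact bot_le
  · have ht : a ≠ ⊤ := fun h' => by rw [h', top_le_iff] at h; exact EReal.coe_ne_top _ h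
    obtain ⟨c, hc⟩ : ∃ c : ℝ, a = (c : EReal) := ⟨_, (EReal.coe_toReal ht hb).symm⟩
    rw [hc, ← EReal.coe_mul, EReal.coe_le_coe_iff]
    rw [hc, EReal.coe_le_coe_iff] at h
    nlinarith

lemma conj_combo {E : Type*} [NormedAddCommGroup E] [InnerProductSpace ℝ E]
    {f : E → EReal} (hbot : ∀ x, f x ≠ ⊥) {u1 u2 : E} {s1 s2 a b : ℝ}
    (h1 : conj f u1 ≤ (s1 : EReal)) (h2 : conj f u2 ≤ (s2 : EReal))
    (ha : 0 ≤ a) (hb : 0 ≤ b) (hab : a + b = 1) :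
    conj f (a • u1 + b • u2) ≤ ((a * s1 + b * s2 : ℝ) : EReal) := by
  apply iSup_le; intro x'
  by_cases hx : f x' = ⊤
  · rw [hx, EReal.sub_top]; exact bot_le
  · obtain ⟨d, hd⟩ : ∃ d : ℝ, f x' = (d : EReal) := ⟨_, (EReal.coe_toReal hx (hbot x')).symm⟩
    have t1 : (inner ℝ x' u1 : ℝ) - d ≤ s1 := by
      have := (coe_term_le_conj hd u1).trans h1; exact_mod_cast this
    have t2 : (inner ℝ x' u2 : ℝ) - d ≤ s2 := by
      have := (coe_term_le_conj hd u2).trans h2; exact_mod_cast this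
    rw [hd, ← EReal.coe_sub, EReal.coe_le_coe_iff]
    have hin : (inner ℝ x' (a • u1 + b • u2) : ℝ) = a * inner ℝ x' u1 + b * inner ℝ x' u2 := by
      rw [inner_add_right, real_inner_smul_right, real_inner_smul_right]
    rw [hin]
    have hd1 : a * d + b * d = d := by rw [← add_mul, hab, one_mul]
    nlinarith [mul_le_mul_of_nonneg_left t1 ha, mul_le_mul_of_nonneg_left t2 hb]

lemma VI_of_min {F : Type*} [NormedAddCommGroup F] [InnerProductSpace ℝ F] {K : Set F}
    (hK : Convex ℝ K) {z p : F} (hp : p ∈ K) (hmin : ∀ q ∈ K, ‖z - p‖ ≤ ‖z - q‖) :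
    ∀ q ∈ K, (inner ℝ (z - p) (q - p) : ℝ) ≤ 0 := by
  haveI : Nonempty K := ⟨⟨p, hp⟩⟩
  have heq : ‖z - p‖ = ⨅ w : K, ‖z - w‖ := by
    refine le_antisymm (le_ciInf fun w => hmin w w.2) ?_
    have hbdd : BddBelow (Set.range fun w : K => ‖z - (w : F)‖) :=
      ⟨0, by rintro t ⟨w, rfl⟩; exact norm_nonneg _⟩
    exact ciInf_le hbdd ⟨p, hp⟩
  exact (norm_eq_iInf_iff_real_inner_le_zero hK hp).mp heq

lemma min_of_VI {F : Type*} [NormedAddCommGroup F] [InnerProductSpace ℝ F] {K : Set F}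
    {z p : F} (hVI : ∀ q ∈ K, (inner ℝ (z - p) (q - p) : ℝ) ≤ 0) :
    ∀ q ∈ K, ‖z - p‖ ≤ ‖z - q‖ := by
  intro q hq
  have h1 := hVI q hq
  have h2 : ‖z - q‖ ^ 2 = ‖z - p‖ ^ 2 - 2 * inner ℝ (z - p) (q - p) + ‖q - p‖ ^ 2 := by
    have e : z - q = (z - p) - (q - p) := by abel
    rw [e, norm_sub_sq_real]
  by_contra hcon; push_neg at hcon
  have h3 := mul_self_lt_mul_self (norm_nonneg _) hcon
  nlinarith [sq_nonneg ‖q - p‖]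

lemma par_mid {F : Type*} [NormedAddCommGroup F] [InnerProductSpace ℝ F] (z a b : F) :
    ‖z - (2:ℝ)⁻¹ • (a + b)‖ ^ 2 = (2 * (‖z - a‖ ^ 2 + ‖z - b‖ ^ 2) - ‖a - b‖ ^ 2) / 4 := by
  have hid : z - (2:ℝ)⁻¹ • (a + b) = (2:ℝ)⁻¹ • ((z - a) + (z - b)) := by module
  have hab : ‖(z - a) - (z - b)‖ = ‖a - b‖ := by
    rw [← norm_neg]; congr 1; abel
  have hpl2 : ‖z - a + (z - b)‖ ^ 2 + ‖a - b‖ ^ 2 = 2 * (‖z - a‖ ^ 2 + ‖z - b‖ ^ 2) := by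
    have hpl := parallelogram_law_with_norm ℝ (z - a) (z - b)
    rw [hab] at hpl
    simp only [pow_two]
    linarith [hpl]
  rw [hid, norm_smul]
  simp only [Real.norm_eq_abs, abs_of_pos (by norm_num : (0:ℝ) < (2:ℝ)⁻¹)]
  nlinarith [hpl2]

lemma proj_unique {F : Type*} [NormedAddCommGroup F] [InnerProductSpace ℝ F] {K : Set F}
    (hK : Convex ℝ K) {z p w : F} (hp : p ∈ K) (hw : w ∈ K)
    (hminp : ∀ q ∈ K, ‖z - p‖ ≤ ‖z - q‖) (hminw : ∀ q ∈ K, ‖z - w‖ ≤ ‖z - q‖) : p = w := by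
  have hm : (2:ℝ)⁻¹ • (p + w) ∈ K := by
    have := hK hp hw (by norm_num : (0:ℝ) ≤ 2⁻¹) (by norm_num : (0:ℝ) ≤ 2⁻¹) (by norm_num)
    rwa [← smul_add] at this
  have heq : ‖z - p‖ = ‖z - w‖ := le_antisymm (hminp w hw) (hminw p hp)
  have hpar := par_mid z p w
  have h1 := hminp _ hm
  have h2 := mul_self_le_mul_self (norm_nonneg _) h1
  have heq2 : ‖z - p‖ ^ 2 = ‖z - w‖ ^ 2 := by rw [heq]
  have h3 : ‖p - w‖ ^ 2 ≤ 0 := by nlinarith [hpar, heq2]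
  have h4 : ‖p - w‖ = 0 := by nlinarith [sq_nonneg ‖p - w‖, norm_nonneg (p - w)]
  exact sub_eq_zero.mp (norm_eq_zero.mp h4)

lemma prox_unique {E : Type*} [NormedAddCommGroup E] [InnerProductSpace ℝ E] {g : E → EReal}
    (hmid : ∀ u v : E, ∀ a b : ℝ, g u ≤ (a : EReal) → g v ≤ (b : EReal) →
      g ((2:ℝ)⁻¹ • (u + v)) ≤ (((a + b) / 2 : ℝ) : EReal))
    {γ : ℝ} (hγ : 0 < γ) {z u v : E} {a b : ℝ}
    (hu : IsProxE g γ z u) (hv : IsProxE g γ z v)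
    (hra : g u = (a : EReal)) (hrb : g v = (b : EReal)) : u = v := by
  have h2γ : (0:ℝ) < 2 * γ := by linarith
  have h1 : a + ‖z - u‖ ^ 2 / (2 * γ) ≤ b + ‖z - v‖ ^ 2 / (2 * γ) := by
    have := hu v; rw [hra, hrb, ← EReal.coe_add, ← EReal.coe_add, EReal.coe_le_coe_iff] at this
    exact this
  have h2 : b + ‖z - v‖ ^ 2 / (2 * γ) ≤ a + ‖z - u‖ ^ 2 / (2 * γ) := by
    have := hv u; rw [hra, hrb, ← EReal.coe_add, ← EReal.coe_add, EReal.coe_le_coe_iff] at this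
    exact this
  have hmidle := hmid u v a b (le_of_eq hra) (le_of_eq hrb)
  have h3 := hu ((2:ℝ)⁻¹ • (u + v))
  have h4 : a + ‖z - u‖ ^ 2 / (2 * γ) ≤ (a + b) / 2 + ‖z - (2:ℝ)⁻¹ • (u + v)‖ ^ 2 / (2 * γ) := by
    have := h3.trans (add_le_add hmidle le_rfl)
    rw [hra, ← EReal.coe_add, ← EReal.coe_add, EReal.coe_le_coe_iff] at this
    exact this
  have hpar := par_mid z u v
  rw [hpar] at h4
  have h5 : ‖u - v‖ ^ 2 ≤ 0 := by
    have e : (2 * (‖z - u‖ ^ 2 + ‖z - v‖ ^ 2) - ‖u - v‖ ^ 2) / 4 / (2 * γ)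
        = ‖z - u‖ ^ 2 / (2 * γ) / 2 + ‖z - v‖ ^ 2 / (2 * γ) / 2
          - ‖u - v‖ ^ 2 / (8 * γ) := by field_simp; ring
    rw [e] at h4
    have h6 : ‖u - v‖ ^ 2 / (8 * γ) ≤ 0 := by linarith
    have h7 := mul_le_mul_of_nonneg_right h6 (show (0:ℝ) ≤ 8 * γ by linarith)
    have e3 : ‖u - v‖ ^ 2 / (8 * γ) * (8 * γ) = ‖u - v‖ ^ 2 := by field_simp
    rw [e3] at h7; linarith
  have h8 : ‖u - v‖ = 0 := by nlinarith [sq_nonneg ‖u - v‖, norm_nonneg (u - v)]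
  exact sub_eq_zero.mp (norm_eq_zero.mp h8)

lemma nu_mono {E : Type*} [NormedAddCommGroup E] [InnerProductSpace ℝ E] {g : E → EReal}
    {γ1 γ2 : ℝ} (hγ1 : 0 < γ1) (hγ2 : 0 < γ2) (hlt : γ1 < γ2) {z u1 u2 : E} {a1 a2 : ℝ}
    (hu1 : IsProxE g γ1 z u1) (hu2 : IsProxE g γ2 z u2)
    (hr1 : g u1 = (a1 : EReal)) (hr2 : g u2 = (a2 : EReal)) : a2 ≤ a1 := by
  have h2γ1 : (0:ℝ) < 2 * γ1 := by linarith
  have h2γ2 : (0:ℝ) < 2 * γ2 := by linarith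
  set A : ℝ := ‖z - u1‖ ^ 2 with hA
  set B : ℝ := ‖z - u2‖ ^ 2 with hB
  have r1 : a1 + A / (2 * γ1) ≤ a2 + B / (2 * γ1) := by
    have := hu1 u2; rw [hr1, hr2, ← EReal.coe_add, ← EReal.coe_add, EReal.coe_le_coe_iff] at this
    exact this
  have r2 : a2 + B / (2 * γ2) ≤ a1 + A / (2 * γ2) := by
    have := hu2 u1; rw [hr1, hr2, ← EReal.coe_add, ← EReal.coe_add, EReal.coe_le_coe_iff] at this
    exact this
  have m1 := mul_le_mul_of_nonneg_right r1 (le_of_lt h2γ1)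
  have m2 := mul_le_mul_of_nonneg_right r2 (le_of_lt h2γ2)
  have e1 : (a1 + A / (2 * γ1)) * (2 * γ1) = a1 * (2 * γ1) + A := by field_simp
  have e1' : (a2 + B / (2 * γ1)) * (2 * γ1) = a2 * (2 * γ1) + B := by field_simp
  have e2 : (a2 + B / (2 * γ2)) * (2 * γ2) = a2 * (2 * γ2) + B := by field_simp
  have e2' : (a1 + A / (2 * γ2)) * (2 * γ2) = a1 * (2 * γ2) + A := by field_simp
  rw [e1, e1'] at m1
  rw [e2, e2'] at m2
  by_contra hcon; push_neg at hcon
  nlinarith [mul_pos (sub_pos.mpr hcon) (sub_pos.mpr hlt)]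


lemma construct_nu {H : Type*} [NormedAddCommGroup H] [InnerProductSpace ℝ H] [CompleteSpace H]
    (f : H → EReal) {x0 : H} {c₀ : ℝ} (hx0 : f x0 = (c₀ : EReal)) (hbot : ∀ u, f u ≠ ⊥)
    {μ : ℝ} (hμ : 0 < μ) (x : H) (η : ℝ) (w : H)
    (hw : IsProjE (closure {u : H | conj f u ≠ ⊤}) (μ⁻¹ • x) w)
    (hcond : (0 : EReal) < (η : EReal) + (μ : EReal) * conj f w) :
    ∃ (ν : ℝ) (p : H) (ρ : ℝ), ν = η - μ * ρ ∧ 0 < ν ∧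
      conj f p = ((-ρ : ℝ) : EReal) ∧ IsProxE (conj f) (ν / μ) (μ⁻¹ • x) p ∧
      ((-ρ : ℝ) : EReal) ≤ conj f w := by
  classical
  set z : H := μ⁻¹ • x with hz
  set ζ : ℝ := η / μ with hζdef
  have hηζ : η = μ * ζ := by rw [hζdef]; field_simp
  set S : Set H := {u : H | conj f u ≠ ⊤} with hS
  have hSne : S.Nonempty := closure_nonempty_iff.mp ⟨w, hw.1⟩
  obtain ⟨u₀, hu₀S⟩ := hSne
  obtain ⟨r₀, hr₀⟩ : ∃ r : ℝ, conj f u₀ = (r : EReal) :=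
    ⟨_, (EReal.coe_toReal hu₀S (conj_ne_bot hx0 u₀)).symm⟩
  have hSconv : Convex ℝ S := by
    rintro u1 hu1 u2 hu2 a b ha hb hab
    obtain ⟨s1, hs1⟩ : ∃ s : ℝ, conj f u1 = (s : EReal) :=
      ⟨_, (EReal.coe_toReal hu1 (conj_ne_bot hx0 u1)).symm⟩
    obtain ⟨s2, hs2⟩ : ∃ s : ℝ, conj f u2 = (s : EReal) :=
      ⟨_, (EReal.coe_toReal hu2 (conj_ne_bot hx0 u2)).symm⟩
    have := conj_combo hbot (le_of_eq hs1) (le_of_eq hs2) ha hb hab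
    intro htop
    rw [htop, top_le_iff] at this
    exact EReal.coe_ne_top _ this
  -- the closed convex set C ⊆ H ⊕₂ ℝ
  set C : Set (WithLp 2 (H × ℝ)) := {q | conj f q.fst ≤ ((-q.snd : ℝ) : EReal)} with hC
  have hCne : C.Nonempty := ⟨(WithLp.equiv 2 (H × ℝ)).symm (u₀, -r₀), by
    show conj f u₀ ≤ ((-(-r₀) : ℝ) : EReal); rw [hr₀, neg_neg]⟩
  have hCconv : Convex ℝ C := by
    rintro q1 hq1 q2 hq2 a b ha hb hab
    have h1 : conj f q1.fst ≤ ((-q1.snd : ℝ) : EReal) := hq1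
    have h2 : conj f q2.fst ≤ ((-q2.snd : ℝ) : EReal) := hq2
    have hcomb := conj_combo hbot h1 h2 ha hb hab
    show conj f ((a • q1 + b • q2).fst) ≤ ((-((a • q1 + b • q2).snd) : ℝ) : EReal)
    have e1 : (a • q1 + b • q2).fst = a • q1.fst + b • q2.fst := rfl
    have e2 : -((a • q1 + b • q2).snd) = a * -q1.snd + b * -q2.snd := by
      show -(a * q1.snd + b * q2.snd) = _; ring
    rw [e1, e2]
    exact hcomb
  have hCclosed : IsClosed C := by
    have hepi : IsClosed {r : H × EReal | conj f r.1 ≤ r.2} := (conj_lsc f).isClosed_epigraph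
    have h1 : Continuous (fun q : WithLp 2 (H × ℝ) => q.fst) :=
      continuous_fst.comp (WithLp.prod_continuous_ofLp 2 H ℝ)
    have h2 : Continuous (fun q : WithLp 2 (H × ℝ) => q.snd) :=
      continuous_snd.comp (WithLp.prod_continuous_ofLp 2 H ℝ)
    have hmap : Continuous (fun q : WithLp 2 (H × ℝ) => ((q.fst, ((-q.snd : ℝ) : EReal)) : H × EReal)) :=
      h1.prodMk (continuous_coe_real_ereal.comp h2.neg)
    exact hepi.preimage hmap
  set z2 : WithLp 2 (H × ℝ) := (WithLp.equiv 2 (H × ℝ)).symm (z, ζ) with hz2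
  obtain ⟨P, hPC, hPmin⟩ :=
    exists_norm_eq_iInf_of_complete_convex hCne hCclosed.isComplete hCconv z2
  have hVI := (norm_eq_iInf_iff_real_inner_le_zero hCconv hPC).mp hPmin
  set p : H := P.fst with hp
  set ρ : ℝ := P.snd with hρ
  have hVI' : ∀ (q : H) (σ : ℝ), conj f q ≤ ((-σ : ℝ) : EReal) →
      (inner ℝ (z - p) (q - p) : ℝ) + (ζ - ρ) * (σ - ρ) ≤ 0 := by
    intro q σ hqσ
    have hmem : ((WithLp.equiv 2 (H × ℝ)).symm (q, σ)) ∈ C := hqσ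
    have h := hVI _ hmem
    rw [WithLp.prod_inner_apply] at h
    have e : ∀ a b : ℝ, inner ℝ a b = b * a := fun a b => by simp [mul_comm]
    simp only [hz2, WithLp.ofLp_sub, WithLp.equiv_symm_apply, Prod.fst_sub, Prod.snd_sub, e] at h
    rw [mul_comm]
    exact h
  have hPmem : conj f p ≤ ((-ρ : ℝ) : EReal) := hPC
  have hpS : p ∈ S := by
    intro htop
    rw [htop, top_le_iff] at hPmem
    exact EReal.coe_ne_top _ hPmem
  -- Step A : 0 ≤ ζ - ρ
  have hζρ : 0 ≤ ζ - ρ := by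
    by_contra hcon; push_neg at hcon
    rw [sub_neg] at hcon
    set K : ℝ := inner ℝ (z - p) (u₀ - p) with hKdef
    set σ : ℝ := min (-r₀) (ρ + (-K + 1) / (ζ - ρ)) with hσdef
    have hqle : conj f u₀ ≤ ((-σ : ℝ) : EReal) := by
      rw [hr₀, EReal.coe_le_coe_iff]
      have := min_le_left (-r₀) (ρ + (-K + 1) / (ζ - ρ))
      linarith
    have h1 := hVI' u₀ σ hqle
    have h2 : σ - ρ ≤ (-K + 1) / (ζ - ρ) := by
      have := min_le_right (-r₀) (ρ + (-K + 1) / (ζ - ρ))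
      linarith
    have hc0 : ζ - ρ < 0 := by linarith
    have h3 : (ζ - ρ) * ((-K + 1) / (ζ - ρ)) ≤ (ζ - ρ) * (σ - ρ) :=
      mul_le_mul_of_nonpos_left h2 (le_of_lt hc0)
    have h4 : (ζ - ρ) * ((-K + 1) / (ζ - ρ)) = -K + 1 := by
      rw [mul_comm, div_mul_cancel₀ _ (ne_of_lt hc0)]
    rw [h4] at h3
    linarith
  -- Step C : strict
  have hstrict : 0 < ζ - ρ := by
    rcases lt_or_eq_of_le hζρ with h | h
    · exact h
    · exfalso
      have hζρeq : ζ = ρ := by linarith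
      have hVIS : ∀ q ∈ S, (inner ℝ (z - p) (q - p) : ℝ) ≤ 0 := by
        intro q hqS
        obtain ⟨sq, hsq⟩ : ∃ s : ℝ, conj f q = (s : EReal) :=
          ⟨_, (EReal.coe_toReal hqS (conj_ne_bot hx0 q)).symm⟩
        have := hVI' q (-sq) (by rw [hsq, neg_neg])
        have hz0 : (ζ - ρ) * (-sq - ρ) = 0 := by rw [← h]; ring
        linarith
      have hVIcl : ∀ q ∈ closure S, (inner ℝ (z - p) (q - p) : ℝ) ≤ 0 := by
        have hclosed : IsClosed {q : H | (inner ℝ (z - p) (q - p) : ℝ) ≤ 0} :=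
          isClosed_le (Continuous.inner continuous_const (continuous_id.sub continuous_const))
            continuous_const
        intro q hq
        exact hclosed.closure_subset_iff.mpr hVIS hq
      have hpmin := min_of_VI hVIcl
      have hpw : p = w := proj_unique hSconv.closure (subset_closure hpS) hw.1 hpmin hw.2
      have hwle : conj f w ≤ ((-ζ : ℝ) : EReal) := by
        rw [← hpw, hζρeq]; exact hPmem
      have hmul := EReal.coe_mul_le_of_le hμ hwle
      have hle0 : (η : EReal) + (μ : EReal) * conj f w ≤ ((η + μ * -ζ : ℝ) : EReal) := by
        rw [EReal.coe_add]
        exact add_le_add le_rfl hmul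
      have hzero : η + μ * -ζ = 0 := by rw [hηζ]; ring
      rw [hzero] at hle0
      exact absurd (lt_of_lt_of_le hcond (by exact_mod_cast hle0)) (lt_irrefl _)
  -- Step B : activity
  have hact : conj f p = ((-ρ : ℝ) : EReal) := by
    refine le_antisymm hPmem ?_
    by_contra hcon; push_neg at hcon
    obtain ⟨s, hs⟩ : ∃ s : ℝ, conj f p = (s : EReal) :=
      ⟨_, (EReal.coe_toReal hpS (conj_ne_bot hx0 p)).symm⟩
    have hslt : s < -ρ := by rw [hs, EReal.coe_lt_coe_iff] at hcon; exact hcon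
    have h1 := hVI' p (-s) (by rw [hs, neg_neg])
    rw [sub_self, inner_zero_right] at h1
    nlinarith [mul_pos hstrict (show (0:ℝ) < -s - ρ by linarith)]
  -- positivity of ν
  have hν : (0:ℝ) < η - μ * ρ := by nlinarith [hstrict, hμ]
  have hγeq : (η - μ * ρ) / μ = ζ - ρ := by
    rw [hηζ]; field_simp
  -- Step D : prox property
  have hprox : IsProxE (conj f) ((η - μ * ρ) / μ) z p := by
    rw [hγeq]
    apply subgrad_prox hstrict hact
    intro y
    by_cases hyt : conj f y = ⊤
    · rw [hyt]; exact le_top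
    obtain ⟨sy, hsy⟩ : ∃ s : ℝ, conj f y = (s : EReal) :=
      ⟨_, (EReal.coe_toReal hyt (conj_ne_bot hx0 y)).symm⟩
    have h1 := hVI' y (-sy) (by rw [hsy, neg_neg])
    rw [hsy, EReal.coe_le_coe_iff]
    have hcm : (inner ℝ (y - p) (z - p) : ℝ) = inner ℝ (z - p) (y - p) := real_inner_comm _ _
    rw [hcm]
    have h2 : (inner ℝ (z - p) (y - p) : ℝ) ≤ (ζ - ρ) * (sy + ρ) := by nlinarith
    have h3 : (inner ℝ (z - p) (y - p) : ℝ) / (ζ - ρ) ≤ sy + ρ := by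
      rw [div_le_iff₀ hstrict]; nlinarith
    linarith
  -- Step E
  have hEle : ((-ρ : ℝ) : EReal) ≤ conj f w := by
    by_contra hcon; push_neg at hcon
    have hwt : conj f w ≠ ⊤ := ne_top_of_lt hcon
    obtain ⟨sw, hsw⟩ : ∃ s : ℝ, conj f w = (s : EReal) :=
      ⟨_, (EReal.coe_toReal hwt (conj_ne_bot hx0 w)).symm⟩
    have hswlt : sw < -ρ := by rw [hsw, EReal.coe_lt_coe_iff] at hcon; exact hcon
    have h1 := hVI' w (-sw) (by rw [hsw, neg_neg])
    have hVIw := VI_of_min hSconv.closure hw.1 hw.2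
    have h2 := hVIw p (subset_closure hpS)
    have hsum : (inner ℝ (z - p) (w - p) : ℝ) + (inner ℝ (z - w) (p - w) : ℝ) = ‖w - p‖ ^ 2 := by
      have e1 : (inner ℝ (z - w) (p - w) : ℝ) = -inner ℝ (z - w) (w - p) := by
        rw [← inner_neg_right]; congr 1; abel
      have e2 : (inner ℝ (z - p) (w - p) : ℝ) - inner ℝ (z - w) (w - p)
          = inner ℝ (w - p) (w - p) := by
        rw [← inner_sub_left]; congr 1; abel
      rw [e1]
      calc (inner ℝ (z - p) (w - p) : ℝ) + -inner ℝ (z - w) (w - p)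
          = (inner ℝ (z - p) (w - p) : ℝ) - inner ℝ (z - w) (w - p) := by ring
        _ = inner ℝ (w - p) (w - p) := e2
        _ = ‖w - p‖ ^ 2 := real_inner_self_eq_norm_sq _
    nlinarith [mul_pos hstrict (show (0:ℝ) < -sw - ρ by linarith), sq_nonneg ‖w - p‖]
  exact ⟨η - μ * ρ, p, ρ, rfl, hν, hact, hprox, hEle⟩


lemma coe_le_of_forall_sub {r : ℝ} {a : EReal}
    (h : ∀ ε : ℝ, 0 < ε → ((r - ε : ℝ) : EReal) ≤ a) : (r : EReal) ≤ a := by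
  by_contra hcon; push_neg at hcon
  obtain ⟨t, ht1, ht2⟩ := EReal.exists_between_coe_real hcon
  have hε : 0 < r - t := by
    rw [EReal.coe_lt_coe_iff] at ht2; linarith
  have := h _ hε
  have e : r - (r - t) = t := by ring
  rw [e] at this
  exact absurd (lt_of_le_of_lt this ht1) (lt_irrefl _)

lemma helper_bound {μ η t : ℝ} (hμ : 0 < μ) {a : EReal} (h : ((t : ℝ) : EReal) ≤ a) :
    ((η + μ * t : ℝ) : EReal) ≤ (η : EReal) + (μ : EReal) * a := by
  by_cases ht : a = ⊤
  · rw [ht, EReal.mul_top_of_pos (by exact_mod_cast hμ : (0:EReal) < (μ:EReal)),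
      EReal.coe_add_top]
    exact le_top
  · have hab : a ≠ ⊥ := fun hb => by rw [hb, le_bot_iff] at h; exact EReal.coe_ne_bot _ h
    obtain ⟨s, hs⟩ : ∃ s : ℝ, a = (s : EReal) := ⟨_, (EReal.coe_toReal ht hab).symm⟩
    rw [hs, EReal.coe_le_coe_iff] at h
    rw [hs, ← EReal.coe_mul, ← EReal.coe_add, EReal.coe_le_coe_iff]
    nlinarith

lemma subgrad_prox2 {E : Type*} [NormedAddCommGroup E] [InnerProductSpace ℝ E]
    {g : E × ℝ → EReal} {γ : ℝ} (hγ : 0 < γ) {z p : E × ℝ} {c : ℝ}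
    (hgp : g p = (c : EReal))
    (hsub : ∀ y : E × ℝ,
      ((c + (inner ℝ (y.1 - p.1) (z.1 - p.1) + (y.2 - p.2) * (z.2 - p.2)) / γ : ℝ) : EReal) ≤ g y) :
    IsProx2 g γ z p := by
  intro y
  by_cases hyb : g y = ⊥
  · exfalso
    have := hsub y
    rw [hyb, le_bot_iff] at this
    exact EReal.coe_ne_bot _ this
  by_cases hyt : g y = ⊤
  · rw [hyt, EReal.top_add_of_ne_bot (EReal.coe_ne_bot _)]; exact le_top
  · obtain ⟨d, hy⟩ : ∃ d : ℝ, g y = (d : EReal) := ⟨_, (EReal.coe_toReal hyt hyb).symm⟩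
    rw [hy]
    have h := hsub y
    rw [hy, EReal.coe_le_coe_iff] at h
    rw [hgp, ← EReal.coe_add, ← EReal.coe_add, EReal.coe_le_coe_iff]
    set I : ℝ := inner ℝ (z.1 - p.1) (y.1 - p.1) + (z.2 - p.2) * (y.2 - p.2) with hI
    set N : ℝ := ‖y.1 - p.1‖ ^ 2 + (y.2 - p.2) ^ 2 with hN
    have h2γ : (0:ℝ) < 2 * γ := by linarith
    have hnorm : ‖z.1 - y.1‖ ^ 2 + (z.2 - y.2) ^ 2
        = (‖z.1 - p.1‖ ^ 2 + (z.2 - p.2) ^ 2) - 2 * I + N := by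
      have hzy : z.1 - y.1 = (z.1 - p.1) - (y.1 - p.1) := by abel
      rw [hzy, norm_sub_sq_real, hI, hN]; ring
    have hip : (inner ℝ (y.1 - p.1) (z.1 - p.1) : ℝ) = inner ℝ (z.1 - p.1) (y.1 - p.1) :=
      real_inner_comm _ _
    rw [hip] at h
    have hIle : c + I / γ ≤ d := by
      have e : (inner ℝ (z.1 - p.1) (y.1 - p.1) + (y.2 - p.2) * (z.2 - p.2)) = I := by
        rw [hI]; ring
      rw [e] at h; exact h
    have hXY : (‖z.1 - p.1‖ ^ 2 + (z.2 - p.2) ^ 2) / (2 * γ)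
        = (‖z.1 - y.1‖ ^ 2 + (z.2 - y.2) ^ 2) / (2 * γ) + (2 * I - N) / (2 * γ) := by
      rw [← add_div]; congr 1; rw [hnorm]; ring
    have h8 : (2 * I - N) / (2 * γ) ≤ I / γ := by
      rw [div_le_div_iff₀ h2γ hγ]
      have hN0 : (0:ℝ) ≤ N := by rw [hN]; positivity
      nlinarith
    linarith

lemma inner_le_recFn {E : Type*} [NormedAddCommGroup E] [InnerProductSpace ℝ E]
    {f : E → EReal} (hbot : ∀ x, f x ≠ ⊥) {x0 : E} {c₀ : ℝ} (hx0 : f x0 = (c₀ : EReal))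
    {u : E} {s : ℝ} (hu : conj f u = (s : EReal)) (y : E) :
    ((inner ℝ y u : ℝ) : EReal) ≤ recFn f x0 y := by
  apply coe_le_of_forall_sub
  intro ε hε
  set c : ℝ := inner ℝ x0 u - s - c₀ with hc
  set t : ℝ := max 1 ((|c| + 1) / ε) with ht
  have ht0 : 0 < t := lt_of_lt_of_le one_pos (le_max_left _ _)
  have hterm : ((inner ℝ y u - ε : ℝ) : EReal) ≤ (f (x0 + t • y) - f x0) * ((t⁻¹ : ℝ) : EReal) := by
    by_cases hft : f (x0 + t • y) = ⊤
    · rw [hft, hx0, EReal.top_sub_coe]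
      rw [EReal.top_mul_of_pos (by exact_mod_cast (inv_pos.mpr ht0) : (0:EReal) < ((t⁻¹:ℝ):EReal))]
      exact le_top
    · obtain ⟨Fv, hFv⟩ : ∃ F : ℝ, f (x0 + t • y) = (F : EReal) :=
        ⟨_, (EReal.coe_toReal hft (hbot _)).symm⟩
      rw [hFv, hx0, ← EReal.coe_sub, ← EReal.coe_mul, EReal.coe_le_coe_iff]
      -- Fenchel–Young at x0 + t•y
      have hFY : (inner ℝ (x0 + t • y) u : ℝ) - Fv ≤ s := by
        have := (coe_term_le_conj hFv u).trans (le_of_eq hu)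
        exact_mod_cast this
      have hinner : (inner ℝ (x0 + t • y) u : ℝ) = inner ℝ x0 u + t * inner ℝ y u := by
        rw [inner_add_left, real_inner_smul_left]
      rw [hinner] at hFY
      -- (Fv - c₀) * t⁻¹ ≥ inner ℝ y u + c / t ≥ inner ℝ y u - ε
      have h1 : inner ℝ y u + c / t ≤ (Fv - c₀) * t⁻¹ := by
        rw [← div_eq_mul_inv, le_div_iff₀ ht0]
        have e : (inner ℝ y u + c / t) * t = t * inner ℝ y u + c := by
          field_simp
        rw [e, hc]
        linarith
      have h2 : -ε ≤ c / t := by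
        have hct : |c| ≤ ε * t := by
          have h3 : (|c| + 1) / ε ≤ t := le_max_right _ _
          rw [div_le_iff₀ hε] at h3
          nlinarith [abs_nonneg c]
        have h4 : -(ε * t) ≤ c := by
          have := neg_abs_le c
          linarith
        rw [neg_le, ← neg_div, div_le_iff₀ ht0]
        linarith
      linarith
  calc ((inner ℝ y u - ε : ℝ) : EReal) ≤ (f (x0 + t • y) - f x0) * ((t⁻¹ : ℝ) : EReal) := hterm
    _ ≤ recFn f x0 y := by
        apply le_iSup_of_le t
        apply le_iSup_of_le (Set.mem_Ioi.mpr ht0)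
        exact le_rfl

end Helpers

theorem stmt9 {H : Type*} [NormedAddCommGroup H] [InnerProductSpace ℝ H] [CompleteSpace H]
    (f : H → EReal) (hf : Gamma0 f) (x0 : H) (hx0 : f x0 ≠ ⊤)
    (μ : ℝ) (hμ : 0 < μ) (x : H) (η : ℝ) (w : H)
    (hw : IsProjE (closure {u : H | conj f u ≠ ⊤}) (μ⁻¹ • x) w)
    (hcond : (0 : EReal) < (η : EReal) + (μ : EReal) * conj f w) :
    (∃! ν : ℝ, 0 < ν ∧ (ν : EReal) ≤ (η : EReal) + (μ : EReal) * conj f w ∧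
      ∀ u, IsProxE (conj f) (ν / μ) (μ⁻¹ • x) u →
        (ν : EReal) = (η : EReal) + (μ : EReal) * conj f u) ∧
    ∀ ν : ℝ, 0 < ν → (ν : EReal) ≤ (η : EReal) + (μ : EReal) * conj f w →
      (∀ u, IsProxE (conj f) (ν / μ) (μ⁻¹ • x) u →
        (ν : EReal) = (η : EReal) + (μ : EReal) * conj f u) →
      ∀ v, IsProxE f (μ / ν) (ν⁻¹ • x) v →
        IsProx2 (persp f x0) μ (x, η) (ν • v, ν) ∧
          persp f x0 (ν • v, ν) = (ν : EReal) * f v := by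
  obtain ⟨hfprop, hbot, hconv, hflsc⟩ := hf
  obtain ⟨c₀, hx0c⟩ : ∃ c : ℝ, f x0 = (c : EReal) := ⟨_, (EReal.coe_toReal hx0 (hbot x0)).symm⟩
  set z : H := μ⁻¹ • x with hzdef
  obtain ⟨ν₀, p, ρ, hν₀def, hν₀pos, hact, hprox₀, hEle⟩ :=
    construct_nu f hx0c hbot hμ x η w hw hcond
  have hmid : ∀ u v : H, ∀ a b : ℝ, conj f u ≤ (a : EReal) → conj f v ≤ (b : EReal) →
      conj f ((2:ℝ)⁻¹ • (u + v)) ≤ (((a + b) / 2 : ℝ) : EReal) :=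
    fun u v a b hu hv => conj_midpoint hbot hu hv
  have hγ₀ : 0 < ν₀ / μ := div_pos hν₀pos hμ
  have hfix₀ : ∀ u, IsProxE (conj f) (ν₀ / μ) z u →
      (ν₀ : EReal) = (η : EReal) + (μ : EReal) * conj f u := by
    intro u hu
    have hut : conj f u ≠ ⊤ := by
      intro htop
      have h1 := hu p
      rw [htop, hact, EReal.top_add_of_ne_bot (EReal.coe_ne_bot _), top_le_iff,
        ← EReal.coe_add] at h1
      exact EReal.coe_ne_top _ h1
    obtain ⟨a, ha⟩ : ∃ a : ℝ, conj f u = (a : EReal) :=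
      ⟨_, (EReal.coe_toReal hut (conj_ne_bot hx0c u)).symm⟩
    have hup : u = p := prox_unique hmid hγ₀ hu hprox₀ ha hact
    rw [hup, hact, ← EReal.coe_mul, ← EReal.coe_add]
    norm_cast
    rw [hν₀def]; ring
  have hbound₀ : (ν₀ : EReal) ≤ (η : EReal) + (μ : EReal) * conj f w := by
    have h1 := helper_bound (η := η) hμ hEle
    have h2 : (ν₀ : EReal) = ((η + μ * -ρ : ℝ) : EReal) := by
      norm_cast; rw [hν₀def]; ring
    rw [h2]; exact h1
  constructor
  · refine ⟨ν₀, ⟨hν₀pos, hbound₀, hfix₀⟩, ?_⟩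
    rintro ν' ⟨hpos', _, hfix'⟩
    have hγ' : 0 < ν' / μ := div_pos hpos' hμ
    obtain ⟨u', hu', a', ha'⟩ := exists_prox (conj f) hmid (conj_lsc f)
      ⟨x0, c₀, fun u => coe_term_le_conj hx0c u⟩ ⟨p, -ρ, le_of_eq hact⟩ hγ' z
    have hv' := hfix' u' hu'
    rw [ha', ← EReal.coe_mul, ← EReal.coe_add] at hv'
    norm_cast at hv'
    have hv₀ : ν₀ = η + μ * (-ρ) := by rw [hν₀def]; ring
    rcases lt_trichotomy ν' ν₀ with hlt | heq | hgt
    · exfalso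
      have hγlt : ν' / μ < ν₀ / μ := by rw [div_lt_div_iff₀ hμ hμ]; nlinarith
      have hmono := nu_mono hγ' hγ₀ hγlt hu' hprox₀ ha' hact
      nlinarith
    · exact heq
    · exfalso
      have hγgt : ν₀ / μ < ν' / μ := by rw [div_lt_div_iff₀ hμ hμ]; nlinarith
      have hmono := nu_mono hγ₀ hγ' hγgt hprox₀ hu' hact ha'
      nlinarith
  · intro ν hν0 hνle hνfix v hv
    have hν0' : ν ≠ 0 := ne_of_gt hν0
    have hμ' : μ ≠ 0 := ne_of_gt hμ
    have hγv : 0 < μ / ν := div_pos hμ hν0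
    have hfvt : f v ≠ ⊤ := by
      intro htop
      have h1 := hv x0
      rw [htop, hx0c, EReal.top_add_of_ne_bot (EReal.coe_ne_bot _), top_le_iff,
        ← EReal.coe_add] at h1
      exact EReal.coe_ne_top _ h1
    obtain ⟨a, hfv⟩ : ∃ a : ℝ, f v = (a : EReal) := ⟨_, (EReal.coe_toReal hfvt (hbot v)).symm⟩
    set u : H := μ⁻¹ • (x - ν • v) with hu
    have hsubf : ∀ y : H, ((inner ℝ (y - v) u : ℝ) : EReal) + f v ≤ f y := by
      intro y
      by_cases hyt : f y = ⊤
      · rw [hyt]; exact le_top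
      obtain ⟨d, hd⟩ : ∃ d : ℝ, f y = (d : EReal) := ⟨_, (EReal.coe_toReal hyt (hbot y)).symm⟩
      have hgrad := prox_subgrad hconv hγv hv hfv hd
      rw [hfv, hd, ← EReal.coe_add, EReal.coe_le_coe_iff]
      have hvec : u = (ν / μ) • (ν⁻¹ • x - v) := by
        rw [hu]; match_scalars <;> (field_simp; try ring)
      have hueq : (inner ℝ (y - v) u : ℝ) = inner ℝ (y - v) (ν⁻¹ • x - v) / (μ / ν) := by
        rw [hvec, real_inner_smul_right, eq_div_iff (ne_of_gt hγv)]
        field_simp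
      rw [hueq]
      linarith [hgrad]
    have hs : conj f u = ((inner ℝ v u - a : ℝ) : EReal) := conj_of_subgrad hbot hfv hsubf
    set s : ℝ := inner ℝ v u - a with hsdef
    have hzu : z - u = (ν / μ) • v := by
      rw [hzdef, hu]; match_scalars <;> (field_simp; try ring)
    have hproxu : IsProxE (conj f) (ν / μ) z u := by
      apply subgrad_prox (div_pos hν0 hμ) hs
      intro y
      have hterm := coe_term_le_conj hfv y
      have heq2 : s + inner ℝ (y - u) (z - u) / (ν / μ) = inner ℝ v y - a := by
        rw [hzu, real_inner_smul_right]
        have hx1 : ν / μ * (inner ℝ (y - u) v : ℝ) / (ν / μ) = inner ℝ (y - u) v := by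
          field_simp
        rw [hx1, hsdef, inner_sub_left]
        have c1 : (inner ℝ v u : ℝ) = inner ℝ u v := real_inner_comm _ _
        have c2 : (inner ℝ y v : ℝ) = inner ℝ v y := real_inner_comm _ _
        rw [c1, c2]
        ring
      rw [show (s + inner ℝ (y - u) (z - u) / (ν / μ) : ℝ) = inner ℝ v y - a from heq2]
      exact hterm
    have hfixu := hνfix u hproxu
    rw [hs, ← EReal.coe_mul, ← EReal.coe_add] at hfixu
    norm_cast at hfixu
    have hpersp : persp f x0 (ν • v, ν) = ((ν * a : ℝ) : EReal) := by
      have h1 : persp f x0 (ν • v, ν) = (ν : EReal) * f (ν⁻¹ • ν • v) := if_pos hν0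
      rw [h1, smul_smul, inv_mul_cancel₀ hν0', one_smul, hfv, ← EReal.coe_mul]
    have hxu : x - ν • v = μ • u := by
      rw [hu]; match_scalars <;> (field_simp; try ring)
    refine ⟨?_, ?_⟩
    · apply subgrad_prox2 hμ hpersp
      intro y
      have hins : (inner ℝ (y.1 - ν • v) (x - ν • v) : ℝ) = μ * inner ℝ (y.1 - ν • v) u := by
        rw [hxu, real_inner_smul_right]
      have hηns : η - ν = μ * (-s) := by
        have : (ν : ℝ) = η + μ * s := hfixu
        linarith
      have hLHS : ν * a + ((inner ℝ (y.1 - ν • v) (x - ν • v) : ℝ) + (y.2 - ν) * (η - ν)) / μ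
          = ν * a + inner ℝ (y.1 - ν • v) u + (y.2 - ν) * (-s) := by
        rw [hins, hηns]; field_simp; ring
      rw [show (ν * a + ((inner ℝ (y.1 - ν • v) (x - ν • v) : ℝ)
        + (y.2 - ν) * (η - ν)) / μ : ℝ) = ν * a + inner ℝ (y.1 - ν • v) u + (y.2 - ν) * (-s)
        from hLHS]
      rcases lt_trichotomy y.2 0 with hy2 | hy2 | hy2
      · have hyp : persp f x0 y = ⊤ := by
          have h1 : ¬ (0 < y.2) := by linarith
          have h2 : ¬ (y.2 = 0) := ne_of_lt hy2
          exact (if_neg h1).trans (if_neg h2)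
        rw [hyp]; exact le_top
      · have hyp : persp f x0 y = recFn f x0 y.1 := by
          have h1 : ¬ (0 < y.2) := by rw [hy2]; exact lt_irrefl 0
          exact (if_neg h1).trans (if_pos hy2)
        rw [hyp]
        have hIR := inner_le_recFn hbot hx0c hs y.1
        have heq3 : ν * a + (inner ℝ (y.1 - ν • v) u : ℝ) + (y.2 - ν) * (-s)
            = inner ℝ y.1 u := by
          rw [inner_sub_left, real_inner_smul_left, hy2, hsdef]
          ring
        rw [show (ν * a + (inner ℝ (y.1 - ν • v) u : ℝ) + (y.2 - ν) * (-s) : ℝ)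
          = inner ℝ y.1 u from heq3]
        exact hIR
      · have hyp : persp f x0 y = (y.2 : EReal) * f (y.2⁻¹ • y.1) := if_pos hy2
        rw [hyp]
        by_cases hft : f (y.2⁻¹ • y.1) = ⊤
        · rw [hft, EReal.coe_mul_top_of_pos hy2]; exact le_top
        · obtain ⟨b, hb⟩ : ∃ b : ℝ, f (y.2⁻¹ • y.1) = (b : EReal) :=
            ⟨_, (EReal.coe_toReal hft (hbot _)).symm⟩
          rw [hb, ← EReal.coe_mul, EReal.coe_le_coe_iff]
          have hFY : (inner ℝ (y.2⁻¹ • y.1) u : ℝ) - b ≤ s := by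
            have := (coe_term_le_conj hb u).trans (le_of_eq hs)
            exact_mod_cast this
          have hiy : (inner ℝ y.1 u : ℝ) = y.2 * inner ℝ (y.2⁻¹ • y.1) u := by
            rw [real_inner_smul_left]; field_simp
          have hvu : (inner ℝ v u : ℝ) = s + a := by rw [hsdef]; ring
          rw [inner_sub_left, real_inner_smul_left, hvu, hiy]
          nlinarith [mul_le_mul_of_nonneg_left
            (show (inner ℝ (y.2⁻¹ • y.1) u : ℝ) - s ≤ b by linarith) (le_of_lt hy2)]
    · rw [hpersp, hfv, ← EReal.coe_mul]
end
end

section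
/- Let φ ∈ Γ₀(ℝ) be even and supercoercive with dom φ = ℝ, set f = φ ∘ ‖·‖ on a real Hilbert space H, and suppose x = 0 and η − δ·φ*(0) > 0 with the perspective value φ̃(0, max{η,0}) > δ. Then the projection of (0,η,δ) onto epi f̃ equals (0, (η − δ φ*(0))/(1 + φ*(0)²), φ*(0)(δ φ*(0) − η)/(1 + φ*(0)²)). -/
open scoped Classical
open Filter Set Topology

noncomputable section

/-! Being even and convex, `φ` is minimal at `0`, so `φ*(0) = -φ(0)`, i.e. `φ(0) = -c`. Hence the
perspective satisfies `f̃(y, μ) ≥ μ φ(0) = -c μ`, and `epi f̃` lies in the half-space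
`c μ + ν ≥ 0`, while the hypotheses on `η, δ` say exactly that `c η + δ < 0`. The claimed point
`(0, α, -c α)` is the orthogonal projection of `(0, η, δ)` onto that half-space, and it belongs to
`epi f̃` since `f̃(0, α) = α φ(0) = -c α`; so it is also the projection onto `epi f̃`. -/

lemma EReal.half_mul_add_half_mul (a : EReal) :
    ((1 / 2 : ℝ) : EReal) * a + ((1 / 2 : ℝ) : EReal) * a = a := by
  induction a using EReal.rec with
  | bot => simp [EReal.coe_mul_bot_of_pos]
  | coe x => norm_cast; ring
  | top => simp [EReal.coe_mul_top_of_pos]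

section

variable {E : Type*} [NormedAddCommGroup E] [NormedSpace ℝ E]

theorem Gamma0.apply_zero_le_of_even {f : E → EReal} (hf : Gamma0 f)
    (heven : ∀ x, f (-x) = f x) (x : E) : f 0 ≤ f x := by
  have hmid := hf.2.2.1 x (-x) (1 / 2) (1 / 2) (by norm_num) (by norm_num) (by norm_num)
  rwa [smul_neg, add_neg_cancel, heven, EReal.half_mul_add_half_mul] at hmid

theorem conjR_zero_of_forall_le {φ : ℝ → EReal} {x₀ : ℝ} (hmin : ∀ x, φ x₀ ≤ φ x) :
    conjR φ 0 = -φ x₀ := by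
  have hterm : ∀ x : ℝ, ((x * 0 : ℝ) : EReal) - φ x = -φ x := by simp
  simp only [conjR, hterm]
  exact le_antisymm (iSup_le fun x => EReal.neg_le_neg_iff.mpr (hmin x))
    (le_iSup (fun x => -φ x) x₀)

theorem persp_zero_fst {f : E → EReal} (htop : f 0 ≠ ⊤) (hbot : f 0 ≠ ⊥) {t : ℝ} (ht : 0 ≤ t) :
    persp f 0 (0, t) = t * f 0 := by
  rcases ht.lt_or_eq with ht | rfl
  · simp [persp, ht]
  · have hrec : recFn f 0 0 = 0 := by
      simp only [recFn, smul_zero, add_zero, EReal.sub_self htop hbot, zero_mul]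
      exact biSup_const nonempty_Ioi
    simp [persp, hrec]

theorem mul_le_of_mem_epiPersp {f : E → EReal} {m : ℝ} (hm : f 0 = m)
    (hmin : ∀ x, f 0 ≤ f x) {p : E × ℝ × ℝ} (hp : p ∈ epiPersp f 0) : m * p.2.1 ≤ p.2.2 := by
  obtain ⟨y, μ, ν⟩ := p
  simp only [epiPersp, persp, mem_ofPred_eq] at hp ⊢
  rcases lt_trichotomy μ 0 with hμ | rfl | hμ
  · simp [hμ.not_gt, hμ.ne] at hp
  · have hrec : (0 : EReal) ≤ recFn f 0 y := by
      refine le_iSup₂_of_le 1 (by norm_num) ?_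
      rw [zero_add, one_smul, inv_one, EReal.coe_one, mul_one, hm]
      exact (EReal.sub_nonneg (by simp) (by simp)).mpr (hm ▸ hmin y)
    simp only [lt_irrefl, if_false, if_true] at hp
    simpa using hrec.trans hp
  · rw [if_pos hμ] at hp
    have hlow : ((μ * m : ℝ) : EReal) ≤ μ * f (μ⁻¹ • y) := by
      rw [EReal.coe_mul, ← hm]
      exact mul_le_mul_of_nonneg_left (hmin _) (by exact_mod_cast hμ.le)
    rw [mul_comm]
    exact_mod_cast hlow.trans hp

theorem halfplane_proj_sq_le {c η δ μ ν : ℝ} (hz : c * η + δ ≤ 0) (hq : 0 ≤ c * μ + ν) :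
    (η - (η - δ * c) / (1 + c ^ 2)) ^ 2 + (δ - c * (δ * c - η) / (1 + c ^ 2)) ^ 2 ≤
      (η - μ) ^ 2 + (δ - ν) ^ 2 := by
  have hL : (0 : ℝ) < 1 + c ^ 2 := by positivity
  have hdist : (η - (η - δ * c) / (1 + c ^ 2)) ^ 2 + (δ - c * (δ * c - η) / (1 + c ^ 2)) ^ 2
      = (c * η + δ) ^ 2 / (1 + c ^ 2) := by
    field_simp
    ring
  -- Cauchy–Schwarz for `(c, 1)` and `(μ - η, ν - δ)`, whose inner product is at least `-(c η + δ) ≥ 0`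
  have hcs : (c * η + δ) ^ 2 ≤ (1 + c ^ 2) * ((η - μ) ^ 2 + (δ - ν) ^ 2) := by
    nlinarith [sq_nonneg ((μ - η) - c * (ν - δ)), mul_nonneg hq (neg_nonneg.mpr hz)]
  rw [hdist, div_le_iff₀ hL]
  linarith

end

theorem stmt11_general {H : Type*} [NormedAddCommGroup H] [InnerProductSpace ℝ H]
    (φ : ℝ → EReal) (hφ : Gamma0 φ) (heven : ∀ x, φ (-x) = φ x)
    (hdom : ∀ x, φ x ≠ ⊤)
    (η δ : ℝ) (c : ℝ) (hc : conjR φ 0 = (c : EReal))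
    (hcond : 0 < η - δ * c)
    (hval : (δ : EReal) < persp φ 0 (0, max η 0)) :
    IsProj3 (epiPersp (fun x : H => φ ‖x‖) 0) ((0 : H), η, δ)
      ((0 : H), (η - δ * c) / (1 + c ^ 2), c * (δ * c - η) / (1 + c ^ 2)) := by
  have hmin : ∀ x, φ 0 ≤ φ x := hφ.apply_zero_le_of_even heven
  have hφ0 : φ 0 = ((-c : ℝ) : EReal) := by
    rw [EReal.coe_neg, ← hc, conjR_zero_of_forall_le hmin, neg_neg]
  have hf0 : φ ‖(0 : H)‖ = ((-c : ℝ) : EReal) := by rw [norm_zero, hφ0]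
  have hout : c * η + δ < 0 := by
    rw [persp_zero_fst (hdom 0) (hφ.2.1 0) (le_max_right η 0), hφ0] at hval
    have : δ < max η 0 * -c := by exact_mod_cast hval
    rcases le_total η 0 with hη | hη
    · rw [max_eq_right hη] at this
      nlinarith
    · rw [max_eq_left hη] at this
      linarith
  have hα : 0 < (η - δ * c) / (1 + c ^ 2) := by positivity
  refine ⟨?_, ?_⟩
  · change persp _ 0 (0, _) ≤ _
    rw [persp_zero_fst (by simp [hφ0]) (by simp [hφ0]) hα.le, hf0, ← EReal.coe_mul]
    exact EReal.coe_le_coe_iff.mpr (le_of_eq (by ring))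
  · rintro ⟨y, μ, ν⟩ hq
    have hcone := mul_le_of_mem_epiPersp hf0 (fun x => by simpa using hmin ‖x‖) hq
    simp only [sub_self, norm_zero, zero_sub, norm_neg]
    nlinarith [halfplane_proj_sq_le hout.le (by linarith : 0 ≤ c * μ + ν), sq_nonneg ‖y‖]

theorem stmt11 {H : Type*} [NormedAddCommGroup H] [InnerProductSpace ℝ H] [CompleteSpace H]
    (φ : ℝ → EReal) (hφ : Gamma0 φ) (heven : ∀ x, φ (-x) = φ x)
    (hdom : ∀ x, φ x ≠ ⊤)
    (hsc : Tendsto (fun x : ℝ => (φ x).toReal / |x|) (cocompact ℝ) atTop)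
    (η δ : ℝ) (c : ℝ) (hc : conjR φ 0 = (c : EReal))
    (hcond : 0 < η - δ * c)
    (hval : (δ : EReal) < persp φ 0 (0, max η 0)) :
    IsProj3 (epiPersp (fun x : H => φ ‖x‖) 0) ((0 : H), η, δ)
      ((0 : H), (η - δ * c) / (1 + c ^ 2), c * (δ * c - η) / (1 + c ^ 2)) :=
  stmt11_general φ hφ heven hdom η δ c hc hcond hval
end
end

section
/- The epigraph of the perspective of the exponential function equals the exponential cone: epi f̃ = {(x,η,δ) ∈ ℝ × (0,+∞) × ℝ : η e^{x/η} ≤ δ} ∪ ((-∞,0] × {0} × [0,+∞)), and this set is a closed convex cone in ℝ³. -/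
open scoped Classical
open Filter Set Topology

noncomputable section

/-! Every tangent line of `exp` lies below it, `eᵗ (s - t + 1) ≤ eˢ`, with equality at `s = t`.
Homogenising, `η e^{x/η} = sup_t eᵗ (x + (1 - t) η)` for `η > 0`, while for `η = 0` this supremum
`sup_t eᵗ x` is, like the recession function of `exp`, the indicator of `x ≤ 0`. So the epigraph
of the perspective is the set where `η ≥ 0` and all the linear functionals
`δ - eᵗ (x + (1 - t) η)` are nonnegative: a dual cone, hence closed and convex. -/

lemma PointedCone.coe_eq_setOf_exists_smul {R E : Type*} [Semiring R] [PartialOrder R]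
    [IsOrderedRing R] [AddCommMonoid E] [Module R E] (C : PointedCone R E) :
    (C : Set E) = {q | ∃ c : R, 0 ≤ c ∧ ∃ p ∈ C, q = c • p} := by
  ext q
  refine ⟨fun hq => ⟨1, zero_le_one, q, hq, (one_smul R q).symm⟩, ?_⟩
  rintro ⟨c, hc, p, hp, rfl⟩
  exact C.smul_mem hc hp

namespace Real

lemma exp_mul_sub_add_one_le_exp (s t : ℝ) : exp t * (s - t + 1) ≤ exp s := by
  calc exp t * (s - t + 1) ≤ exp t * exp (s - t) := by gcongr; exact add_one_le_exp _
    _ = exp s := by rw [← exp_add, add_sub_cancel]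

lemma mul_exp_div_le_iff_forall {x η δ : ℝ} (hη : 0 < η) :
    η * exp (x / η) ≤ δ ↔ ∀ t, exp t * (x + (1 - t) * η) ≤ δ := by
  have key : ∀ t, exp t * (x + (1 - t) * η) = η * (exp t * (x / η - t + 1)) := fun t => by
    field_simp; ring
  refine ⟨fun h t => ?_, fun h => by simpa [key] using h (x / η)⟩
  rw [key]
  exact (mul_le_mul_of_nonneg_left (exp_mul_sub_add_one_le_exp _ t) hη.le).trans h

lemma forall_exp_mul_le_iff {x δ : ℝ} : (∀ t, exp t * x ≤ δ) ↔ x ≤ 0 ∧ 0 ≤ δ := by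
  refine ⟨fun h => ⟨?_, ?_⟩, fun ⟨hx, hδ⟩ t => ?_⟩
  · by_contra! hx
    obtain ⟨t, ht⟩ := ((tendsto_exp_atTop.atTop_mul_const hx).eventually_gt_atTop δ).exists
    exact (h t).not_gt ht
  · have : Tendsto (fun t => exp t * x) atBot (𝓝 0) := by
      simpa using tendsto_exp_atBot.mul_const x
    exact le_of_tendsto' this h
  · exact (mul_nonpos_of_nonneg_of_nonpos (exp_pos t).le hx).trans hδ

lemma forall_exp_mul_sub_one_div_le_iff {x δ : ℝ} :
    (∀ t > 0, (exp (t * x) - 1) / t ≤ δ) ↔ x ≤ 0 ∧ 0 ≤ δ := by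
  refine ⟨fun h => ⟨?_, ?_⟩, fun ⟨hx, hδ⟩ t ht => ?_⟩
  · by_contra! hx
    -- `exp (t x) ≥ 1 + t x + (t x)² / 2` makes the quotient grow linearly in `t`
    have hlow : ∀ t > 0, x + x ^ 2 / 2 * t ≤ (exp (t * x) - 1) / t := fun t ht => by
      rw [le_div_iff₀ ht]
      nlinarith [quadratic_le_exp_of_nonneg (by positivity : 0 ≤ t * x)]
    have hlin : Tendsto (fun t => x + x ^ 2 / 2 * t) atTop atTop :=
      tendsto_atTop_add_const_left _ _ (tendsto_id.const_mul_atTop (by positivity))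
    obtain ⟨t, hδt, ht⟩ := ((hlin.eventually_gt_atTop δ).and (eventually_gt_atTop 0)).exists
    exact (hlow t ht |>.trans (h t ht)).not_gt hδt
  · have hlow : ∀ t > 0, -t⁻¹ ≤ δ := fun t ht =>
      calc -t⁻¹ = (0 - 1) / t := by ring
        _ ≤ (exp (t * x) - 1) / t := by gcongr; exact (exp_pos _).le
        _ ≤ δ := h t ht
    have : Tendsto (fun t : ℝ => -t⁻¹) atTop (𝓝 0) := by
      simpa using (tendsto_inv_atTop_zero (𝕜 := ℝ)).neg
    exact le_of_tendsto this ((eventually_gt_atTop (0 : ℝ)).mono hlow)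
  · have : exp (t * x) ≤ 1 := exp_le_one_iff.2 (mul_nonpos_of_nonneg_of_nonpos ht.le hx)
    exact (div_nonpos_of_nonpos_of_nonneg (by linarith) ht.le).trans hδ

end Real

lemma recFn_exp_le_iff (x δ : ℝ) :
    recFn (fun ξ : ℝ => ((Real.exp ξ : ℝ) : EReal)) 0 x ≤ δ ↔ x ≤ 0 ∧ 0 ≤ δ := by
  rw [recFn, iSup₂_le_iff, ← Real.forall_exp_mul_sub_one_div_le_iff]
  refine forall₂_congr fun t _ => ?_
  rw [zero_add, smul_eq_mul, Real.exp_zero, ← EReal.coe_sub, ← EReal.coe_mul,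
    EReal.coe_le_coe_iff, div_eq_mul_inv]

lemma epiPersp_exp_eq_union :
    epiPersp (fun ξ : ℝ => ((Real.exp ξ : ℝ) : EReal)) 0 =
      {p : ℝ × ℝ × ℝ | 0 < p.2.1 ∧ p.2.1 * Real.exp (p.1 / p.2.1) ≤ p.2.2} ∪
        {p : ℝ × ℝ × ℝ | p.1 ≤ 0 ∧ p.2.1 = 0 ∧ 0 ≤ p.2.2} := by
  ext ⟨x, η, δ⟩
  simp only [epiPersp, persp, mem_ofPred_eq, mem_union]
  rcases lt_trichotomy 0 η with hη | rfl | hη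
  · rw [if_pos hη, smul_eq_mul, inv_mul_eq_div, ← EReal.coe_mul, EReal.coe_le_coe_iff]
    simp [hη, hη.ne']
  · simp [recFn_exp_le_iff]
  · simp [hη.not_gt, hη.ne]

/-- Homogenisation of the tangent line `s ↦ eᵗ (s - t + 1)` of `exp` at `t`. -/
def expTangentForm (t : ℝ) : Module.Dual ℝ (ℝ × ℝ × ℝ) where
  toFun p := p.2.2 - Real.exp t * (p.1 + (1 - t) * p.2.1)
  map_add' p q := by simp only [Prod.fst_add, Prod.snd_add]; ring
  map_smul' c p := by
    simp only [Prod.smul_fst, Prod.smul_snd, smul_eq_mul, RingHom.id_apply]; ring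

@[simp]
lemma expTangentForm_apply (t : ℝ) (p : ℝ × ℝ × ℝ) :
    expTangentForm t p = p.2.2 - Real.exp t * (p.1 + (1 - t) * p.2.1) := rfl

def expCone : PointedCone ℝ (ℝ × ℝ × ℝ) :=
  PointedCone.dual (LinearMap.id : Module.Dual ℝ (ℝ × ℝ × ℝ) →ₗ[ℝ] Module.Dual ℝ (ℝ × ℝ × ℝ))
    (insert (LinearMap.fst ℝ ℝ ℝ ∘ₗ LinearMap.snd ℝ ℝ (ℝ × ℝ)) (range expTangentForm))

lemma mem_expCone {p : ℝ × ℝ × ℝ} :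
    p ∈ expCone ↔ 0 ≤ p.2.1 ∧ ∀ t, Real.exp t * (p.1 + (1 - t) * p.2.1) ≤ p.2.2 := by
  simp [expCone]

lemma isClosed_expCone : IsClosed (expCone : Set (ℝ × ℝ × ℝ)) :=
  PointedCone.isClosed_dual fun ℓ => ℓ.continuous_of_finiteDimensional

lemma coe_expCone :
    (expCone : Set (ℝ × ℝ × ℝ)) =
      {p : ℝ × ℝ × ℝ | 0 < p.2.1 ∧ p.2.1 * Real.exp (p.1 / p.2.1) ≤ p.2.2} ∪
        {p : ℝ × ℝ × ℝ | p.1 ≤ 0 ∧ p.2.1 = 0 ∧ 0 ≤ p.2.2} := by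
  ext ⟨x, η, δ⟩
  simp only [SetLike.mem_coe, mem_expCone, mem_union, mem_ofPred_eq]
  rcases lt_trichotomy 0 η with hη | rfl | hη
  · simp [hη, hη.le, hη.ne', Real.mul_exp_div_le_iff_forall hη]
  · simp [Real.forall_exp_mul_le_iff]
  · simp [hη.not_gt, hη.ne, hη.not_ge]

theorem stmt13 :
    epiPersp (fun ξ : ℝ => ((Real.exp ξ : ℝ) : EReal)) 0 =
      ({p : ℝ × ℝ × ℝ | 0 < p.2.1 ∧ p.2.1 * Real.exp (p.1 / p.2.1) ≤ p.2.2} ∪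
        {p : ℝ × ℝ × ℝ | p.1 ≤ 0 ∧ p.2.1 = 0 ∧ 0 ≤ p.2.2}) ∧
    IsClosed (epiPersp (fun ξ : ℝ => ((Real.exp ξ : ℝ) : EReal)) 0) ∧
    Convex ℝ (epiPersp (fun ξ : ℝ => ((Real.exp ξ : ℝ) : EReal)) 0) ∧
    epiPersp (fun ξ : ℝ => ((Real.exp ξ : ℝ) : EReal)) 0 =
      {q : ℝ × ℝ × ℝ | ∃ c : ℝ, 0 ≤ c ∧
        ∃ p ∈ epiPersp (fun ξ : ℝ => ((Real.exp ξ : ℝ) : EReal)) 0, q = c • p} := by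
  have hK : epiPersp (fun ξ : ℝ => ((Real.exp ξ : ℝ) : EReal)) 0 = expCone :=
    epiPersp_exp_eq_union.trans coe_expCone.symm
  refine ⟨epiPersp_exp_eq_union, ?_, ?_, ?_⟩ <;> rw [hK]
  · exact isClosed_expCone
  · exact expCone.convex
  · exact expCone.coe_eq_setOf_exists_smul
end
end

section
/- Let f(ξ) = ξ/(1−ξ) for ξ < 1 and +∞ otherwise. The perspective of f is f̃(x,η) = ηx/(η−x) if η > 0 and x < η, ι_{(-∞,0]}(x) if η = 0, and +∞ otherwise; moreover the closure of dom f̃ is {(x,η) ∈ ℝ² : η ≥ 0 and x ≤ η}, and the projection onto this set is given by P(x,η) = (min{0,x},0) if η ≤ 0 and x ≤ −η; ((x+η)/2,(x+η)/2) if |η| ≤ x; and (x,η) otherwise. -/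
/-
For `η > 0` the perspective is `η f(x/η) = ηx/(η - x)`; for `η = 0` the difference quotients
`(f(tx) - f(0))/t = x/(1 - tx)` are `+∞` as soon as `tx ≥ 1` when `x > 0`, and increase to `0`
when `x ≤ 0`, so `rec f = ι_{(-∞,0]}`. The domain is thus the open cone `0 < η, x < η` plus the
ray `η = 0, x ≤ 0`, whose closure is the closed cone `K = {0 ≤ η, x ≤ η}`. The projection formula
is checked through the variational inequality `⟪z - P z, q - P z⟫ ≤ 0` for `q ∈ K`, which in each
of the three regions reduces to a sign condition.
-/

open scoped Classical
open Filter Set Topology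

noncomputable section

/-- the hyperbolic penalty `ξ ↦ ξ/(1-ξ)` for `ξ < 1`, `+∞` otherwise. -/
def fhyp (ξ : ℝ) : EReal := if ξ < 1 then ((ξ / (1 - ξ) : ℝ) : EReal) else ⊤

lemma fhyp_of_lt {ξ : ℝ} (h : ξ < 1) : fhyp ξ = ((ξ / (1 - ξ) : ℝ) : EReal) := if_pos h

lemma fhyp_of_one_le {ξ : ℝ} (h : 1 ≤ ξ) : fhyp ξ = ⊤ := if_neg h.not_gt

lemma fhyp_difference_quotient {t x : ℝ} (ht : 0 < t) (htx : t * x < 1) :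
    (fhyp (0 + t • x) - fhyp 0) * ((t⁻¹ : ℝ) : EReal) = ((x / (1 - t * x) : ℝ) : EReal) := by
  rw [zero_add, smul_eq_mul, fhyp_of_lt htx, fhyp_of_lt one_pos, ← EReal.coe_sub,
    ← EReal.coe_mul]
  congr 1
  field_simp
  ring

lemma recFn_fhyp_of_pos {x : ℝ} (hx : 0 < x) : recFn fhyp 0 x = ⊤ := by
  refine eq_top_iff.mpr (le_trans ?_ (le_iSup₂_of_le x⁻¹ (inv_pos.mpr hx) le_rfl))
  rw [zero_add, smul_eq_mul, inv_mul_cancel₀ hx.ne', fhyp_of_one_le le_rfl,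
    fhyp_of_lt one_pos, inv_inv]
  norm_num [EReal.top_mul_of_pos (EReal.coe_pos.mpr hx)]

lemma recFn_fhyp_of_nonpos {x : ℝ} (hx : x ≤ 0) : recFn fhyp 0 x = 0 := by
  have quotient : ∀ t : ℝ, 0 < t →
      (fhyp (0 + t • x) - fhyp 0) * ((t⁻¹ : ℝ) : EReal) = ((x / (1 - t * x) : ℝ) : EReal) :=
    fun t ht => fhyp_difference_quotient ht (by nlinarith)
  apply le_antisymm
  · refine iSup₂_le fun t ht => ?_
    rw [quotient t ht]
    exact EReal.coe_nonpos.mpr (div_nonpos_of_nonpos_of_nonneg hx (by nlinarith [mem_Ioi.mp ht]))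
  rcases hx.eq_or_lt with rfl | hx
  · exact le_iSup₂_of_le 1 (mem_Ioi.mpr one_pos) (by rw [quotient 1 one_pos]; simp)
  have h_lim : Tendsto (fun t : ℝ => x / (1 - t * x)) atTop (𝓝 0) := by
    refine tendsto_const_nhds.div_atTop ?_
    simpa [sub_eq_add_neg] using
      tendsto_atTop_add_const_left _ 1 (tendsto_id.atTop_mul_const (neg_pos.mpr hx))
  refine le_of_tendsto (EReal.tendsto_coe.mpr h_lim) ?_
  filter_upwards [eventually_gt_atTop 0] with t ht
  exact le_iSup₂_of_le t ht (quotient t ht).ge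

lemma persp_fhyp (x η : ℝ) : persp fhyp 0 (x, η) =
    (if 0 < η ∧ x < η then ((η * x / (η - x) : ℝ) : EReal)
      else if η = 0 ∧ x ≤ 0 then (0 : EReal) else ⊤) := by
  rcases lt_trichotomy η 0 with hη | rfl | hη
  · simp [persp, hη.ne, hη.not_gt]
  · by_cases hx : x ≤ 0
    · simp [persp, hx, recFn_fhyp_of_nonpos hx]
    · simp [persp, hx, recFn_fhyp_of_pos (not_le.mp hx)]
  · have h_scaled : η⁻¹ • x < 1 ↔ x < η := by
      rw [smul_eq_mul, inv_mul_eq_div, div_lt_one hη]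
    by_cases hxη : x < η
    · rw [persp, if_pos hη, if_pos ⟨hη, hxη⟩, fhyp_of_lt (h_scaled.mpr hxη), ← EReal.coe_mul]
      congr 1
      rw [smul_eq_mul]
      field_simp
    · rw [persp, if_pos hη, if_neg (fun h => hxη h.2), if_neg (fun h => hη.ne' h.1),
        fhyp_of_one_le (not_lt.mp (h_scaled.not.mpr hxη))]
      exact EReal.mul_top_of_pos (EReal.coe_pos.mpr hη)

lemma persp_fhyp_ne_top_iff (p : ℝ × ℝ) :
    persp fhyp 0 p ≠ ⊤ ↔ (0 < p.2 ∧ p.1 < p.2) ∨ (p.2 = 0 ∧ p.1 ≤ 0) := by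
  rw [persp_fhyp]
  split_ifs <;> simp_all

lemma closure_dom_persp_fhyp :
    closure {p : ℝ × ℝ | persp fhyp 0 p ≠ ⊤} = {p : ℝ × ℝ | 0 ≤ p.2 ∧ p.1 ≤ p.2} := by
  simp only [persp_fhyp_ne_top_iff]
  refine Subset.antisymm (closure_minimal ?_ ?_) fun p hp => ?_
  · rintro p (⟨h₁, h₂⟩ | ⟨h₁, h₂⟩) <;> constructor <;> linarith
  · exact (isClosed_le continuous_const continuous_snd).inter
      (isClosed_le continuous_fst continuous_snd)
  have h_path : Tendsto (fun ε : ℝ => (p.1 - ε, p.2 + ε)) (𝓝[>] 0) (𝓝 p) := by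
    refine (Continuous.tendsto' ?_ 0 p (by simp)).mono_left nhdsWithin_le_nhds
    fun_prop
  refine mem_closure_of_tendsto h_path (eventually_nhdsWithin_of_forall fun ε hε => ?_)
  have hε_pos := mem_Ioi.mp hε
  exact Or.inl ⟨by linarith [hp.1], by linarith [hp.2]⟩

lemma isProj2_of_inner_le {E : Type*} [NormedAddCommGroup E] [InnerProductSpace ℝ E]
    {C : Set (E × ℝ)} {z p : E × ℝ} (hp : p ∈ C)
    (h : ∀ q ∈ C, inner ℝ (z.1 - p.1) (q.1 - p.1) + (z.2 - p.2) * (q.2 - p.2) ≤ 0) :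
    IsProj2 C z p := by
  refine ⟨hp, fun q hq => ?_⟩
  have expand : z.1 - q.1 = (z.1 - p.1) - (q.1 - p.1) := by abel
  rw [expand, norm_sub_sq_real (z.1 - p.1) (q.1 - p.1)]
  nlinarith [h q hq, sq_nonneg (q.2 - p.2), sq_nonneg ‖q.1 - p.1‖]

lemma isProj2_cone (x η : ℝ) :
    IsProj2 {p : ℝ × ℝ | 0 ≤ p.2 ∧ p.1 ≤ p.2} (x, η)
      (if η ≤ 0 ∧ x ≤ -η then (min 0 x, 0)
        else if |η| ≤ x then ((x + η) / 2, (x + η) / 2) else (x, η)) := by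
  split_ifs with h_polar h_edge
  · refine isProj2_of_inner_le ⟨le_rfl, min_le_left 0 x⟩ fun q ⟨hq₂, hq₁₂⟩ => ?_
    simp only [RCLike.inner_apply, conj_trivial]
    rcases le_total x 0 with hx | hx
    · rw [min_eq_right hx]
      nlinarith
    · rw [min_eq_left hx]
      nlinarith
  · have h_neg_le : -η ≤ x := (neg_le_abs η).trans h_edge
    have h_le : η ≤ x := (le_abs_self η).trans h_edge
    refine isProj2_of_inner_le ⟨by linarith, le_rfl⟩ fun q ⟨hq₂, hq₁₂⟩ => ?_
    simp only [RCLike.inner_apply, conj_trivial]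
    nlinarith [mul_nonneg (sub_nonneg.mpr h_le) (sub_nonneg.mpr hq₁₂)]
  · have hη : 0 ≤ η := by
      by_contra! hη
      exact h_edge (by rw [abs_of_neg hη]; linarith [not_and.mp h_polar hη.le])
    rw [abs_of_nonneg hη] at h_edge
    exact isProj2_of_inner_le ⟨hη, (not_le.mp h_edge).le⟩ fun q _ => by simp

theorem stmt16 :
    (∀ x η : ℝ, persp fhyp 0 (x, η) =
      (if 0 < η ∧ x < η then ((η * x / (η - x) : ℝ) : EReal)
        else if η = 0 ∧ x ≤ 0 then (0 : EReal) else ⊤)) ∧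
    closure {p : ℝ × ℝ | persp fhyp 0 p ≠ ⊤} = {p : ℝ × ℝ | 0 ≤ p.2 ∧ p.1 ≤ p.2} ∧
    ∀ x η : ℝ, IsProj2 {p : ℝ × ℝ | 0 ≤ p.2 ∧ p.1 ≤ p.2} (x, η)
      (if η ≤ 0 ∧ x ≤ -η then (min 0 x, 0)
        else if |η| ≤ x then ((x + η) / 2, (x + η) / 2) else (x, η)) :=
  ⟨persp_fhyp, closure_dom_persp_fhyp, isProj2_cone⟩
end
end

section
/- Let f(ξ) = ξ/(1−ξ) for ξ < 1 (+∞ otherwise) and γ > 0. Then for every x ∈ ℝ, p = prox_{γf}(x) is the unique solution in (−∞,1) of the cubic equation (x−p)(1−p)² = γ, and q = prox_{γ f*}(x) is the unique solution in (max{x−γ,0},+∞) of the cubic equation q³ + 2(γ−x)q² + (γ−x)² q − γ² = 0, where f*(ξ) = (√ξ−1)² for ξ ≥ 0 and +∞ otherwise. -/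
/-!
Both proximal points come from the first-order condition of a one-dimensional minimization.
For `f`, the derivative `1/(1-p)² - (x-p)/γ` of `ξ ↦ f ξ + (x-ξ)²/(2γ)` vanishes at `p`.
For `f*`, writing `ξ = s²` gives the smooth objective `(s-1)² + (x-s²)²/(2γ)` on `s ≥ 0`; its
right derivative `-2` at `0` excludes `q = 0`, and at `s = √q > 0` the condition reads
`√q (q + γ - x) = γ`, whose square is the cubic `q (q + γ - x)² = γ²`.
Both equations have the shape `(t - a)(t - b)² = c` with `c > 0` on a half-line `t > b`
(with `t = -p` for the first); there the left side is continuous and strictly increasing from `0`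
to `∞`, whence existence and uniqueness.
-/

open scoped Classical
open Filter Set Topology

noncomputable section

theorem lt_of_sub_mul_sub_sq_eq {a b c t : ℝ} (hc : 0 < c) (h : (t - a) * (t - b) ^ 2 = c) :
    a < t := by
  by_contra! hta
  have : (t - a) * (t - b) ^ 2 ≤ 0 :=
    mul_nonpos_of_nonpos_of_nonneg (by linarith) (sq_nonneg _)
  linarith

theorem existsUnique_sub_mul_sub_sq_eq {a b c : ℝ} (hc : 0 < c) :
    ∃! t, b < t ∧ (t - a) * (t - b) ^ 2 = c := by
  set g : ℝ → ℝ := fun t => (t - a) * (t - b) ^ 2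
  have g_strictMonoOn : StrictMonoOn g (Ioi (max a b)) := by
    intro s hs t ht hst
    have hsa : 0 < s - a := by linarith [le_max_left a b, mem_Ioi.1 hs]
    have hsb : 0 < s - b := by linarith [le_max_right a b, mem_Ioi.1 hs]
    have hsq : (s - b) ^ 2 < (t - b) ^ 2 := by gcongr
    exact mul_lt_mul'' (by linarith) hsq hsa.le (sq_nonneg _)
  refine existsUnique_of_exists_of_unique ?_ ?_
  · set M := max a b + c + 1
    have hgb : g b = 0 := by simp [g]
    have hgM : c ≤ g M := by
      have hMa : c + 1 ≤ M - a := by linarith [le_max_left a b]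
      have hMb : c + 1 ≤ M - b := by linarith [le_max_right a b]
      calc c ≤ (c + 1) * (c + 1) ^ 2 := by nlinarith
        _ ≤ (M - a) * (M - b) ^ 2 := by gcongr; linarith
    obtain ⟨t, ⟨hbt, -⟩, hgt⟩ := intermediate_value_Icc (f := g) (by linarith [le_max_right a b])
      (by fun_prop) ⟨hgb ▸ hc.le, hgM⟩
    refine ⟨t, lt_of_le_of_ne hbt ?_, hgt⟩
    rintro rfl
    linarith
  · rintro s t ⟨hbs, hs⟩ ⟨hbt, ht⟩
    have has := lt_of_sub_mul_sub_sq_eq hc hs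
    have hat := lt_of_sub_mul_sub_sq_eq hc ht
    exact g_strictMonoOn.injOn (max_lt has hbs) (max_lt hat hbt) (hs.trans ht.symm)

theorem existsUnique_sub_mul_sub_sq_eq' {a b c : ℝ} (hc : 0 < c) :
    ∃! t, t < b ∧ (a - t) * (b - t) ^ 2 = c := by
  obtain ⟨t, ⟨hbt, ht⟩, huniq⟩ := existsUnique_sub_mul_sub_sq_eq (a := -a) (b := -b) hc
  refine ⟨-t, ⟨by linarith, by linear_combination ht⟩, fun s ⟨hsb, hs⟩ => ?_⟩
  linarith [huniq (-s) ⟨by linarith, by linear_combination hs⟩]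

theorem isProxE_ite_iff {E : Type*} [NormedAddCommGroup E] {P : E → Prop} [DecidablePred P]
    {φ : E → ℝ} {γ : ℝ} {z p : E} (hP : ∃ y, P y) :
    IsProxE (fun y => if P y then (φ y : EReal) else ⊤) γ z p ↔
      P p ∧ ∀ y, P y → φ p + ‖z - p‖ ^ 2 / (2 * γ) ≤ φ y + ‖z - y‖ ^ 2 / (2 * γ) := by
  constructor
  · intro h
    have hp : P p := by
      by_contra hp
      obtain ⟨y, hy⟩ := hP
      have := h y
      simp only [if_pos hy, if_neg hp, EReal.top_add_coe, ← EReal.coe_add, top_le_iff] at this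
      exact EReal.coe_ne_top _ this
    refine ⟨hp, fun y hy => ?_⟩
    have := h y
    simp only [if_pos hy, if_pos hp] at this
    exact_mod_cast this
  · rintro ⟨hp, hmin⟩ y
    simp only [if_pos hp]
    split_ifs with hy
    · exact_mod_cast hmin y hy
    · simp

theorem IsLocalMinOn.hasDerivWithinAt_Ici_nonneg {f : ℝ → ℝ} {a f' : ℝ}
    (h : IsLocalMinOn f (Ici a) a) (hf : HasDerivWithinAt f f' (Ici a) a) : 0 ≤ f' := by
  have h1 : (1 : ℝ) ∈ posTangentConeAt (Ici a) a := mem_posTangentConeAt_of_segment_subset <| by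
    rw [segment_eq_Icc (by linarith)]
    exact Icc_subset_Ici_self
  simpa using h.hasFDerivWithinAt_nonneg hf.hasFDerivWithinAt h1

theorem isProxE_fhyp {γ x p : ℝ} (hγ : 0 < γ) (h : IsProxE fhyp γ x p) :
    p < 1 ∧ (x - p) * (1 - p) ^ 2 = γ := by
  obtain ⟨hp, hmin⟩ := (isProxE_ite_iff (P := (· < 1)) (φ := fun ξ => ξ / (1 - ξ))
    ⟨0, one_pos⟩).1 h
  set F : ℝ → ℝ := fun y => y / (1 - y) + (x - y) ^ 2 / (2 * γ)
  have hF : IsLocalMin F p := IsMinOn.isLocalMin (s := Iio 1)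
    (fun y hy => by simpa [F, Real.norm_eq_abs, sq_abs] using hmin y hy) (isOpen_Iio.mem_nhds hp)
  have hne : 1 - p ≠ 0 := sub_ne_zero.2 hp.ne'
  have hderiv : HasDerivAt F (1 / (1 - p) ^ 2 - (x - p) / γ) p := by
    refine (((hasDerivAt_id' p).div ((hasDerivAt_id' p).const_sub 1) hne).add
      ((((hasDerivAt_id' p).const_sub x).pow 2).div_const (2 * γ))).congr_deriv ?_
    field_simp
    ring
  have := hF.hasDerivAt_eq_zero hderiv
  field_simp at this
  exact ⟨hp, by linarith⟩

theorem isProxE_sqrt_sub_one_sq {γ x q : ℝ} (hγ : 0 < γ)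
    (h : IsProxE (fun ξ : ℝ => if 0 ≤ ξ then (((Real.sqrt ξ - 1) ^ 2 : ℝ) : EReal) else ⊤) γ x q) :
    x - γ < q ∧ q * (q - (x - γ)) ^ 2 = γ ^ 2 := by
  obtain ⟨hq, hmin⟩ := (isProxE_ite_iff ⟨0, le_rfl⟩).1 h
  -- Substituting `ξ = s ^ 2` makes the objective smooth up to the boundary of `dom f*`.
  set G : ℝ → ℝ := fun s => (s - 1) ^ 2 + (x - s ^ 2) ^ 2 / (2 * γ)
  have hG : IsMinOn G (Ici 0) √q := fun s hs => by
    simpa [G, Real.norm_eq_abs, sq_abs, Real.sqrt_sq hs, Real.sq_sqrt hq]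
      using hmin (s ^ 2) (sq_nonneg s)
  have hderiv (s : ℝ) : HasDerivAt G (2 * (s - 1) - 2 * s * (x - s ^ 2) / γ) s := by
    refine ((((hasDerivAt_id' s).sub_const 1).pow 2).add
      ((((hasDerivAt_pow 2 s).const_sub x).pow 2).div_const (2 * γ))).congr_deriv ?_
    field_simp
    ring
  have hpos : 0 < √q := by
    refine (Real.sqrt_nonneg q).lt_of_ne fun h0 => ?_
    rw [← h0] at hG
    -- `G'(0) = -2 < 0`, so `0` cannot minimize `G` on `[0, ∞)`.
    have := hG.localize.hasDerivWithinAt_Ici_nonneg (hderiv 0).hasDerivWithinAt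
    norm_num at this
  have hcrit := (hG.isLocalMin (Ici_mem_nhds hpos)).hasDerivAt_eq_zero (hderiv _)
  rw [Real.sq_sqrt hq] at hcrit
  field_simp at hcrit
  have hfoc : √q * (q - (x - γ)) = γ := by linarith
  refine ⟨?_, ?_⟩
  · nlinarith
  · linear_combination (√q * (q - (x - γ)) + γ) * hfoc - (q - (x - γ)) ^ 2 * Real.sq_sqrt hq

theorem stmt17 (γ : ℝ) (hγ : 0 < γ) (x : ℝ) :
    ((∀ p : ℝ, IsProxE fhyp γ x p → p < 1 ∧ (x - p) * (1 - p) ^ 2 = γ) ∧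
      (∃! p : ℝ, p < 1 ∧ (x - p) * (1 - p) ^ 2 = γ)) ∧
    ((∀ q : ℝ, IsProxE (fun ξ : ℝ => if 0 ≤ ξ then (((Real.sqrt ξ - 1) ^ 2 : ℝ) : EReal)
          else ⊤) γ x q →
        max (x - γ) 0 < q ∧ q ^ 3 + 2 * (γ - x) * q ^ 2 + (γ - x) ^ 2 * q - γ ^ 2 = 0) ∧
      (∃! q : ℝ, max (x - γ) 0 < q ∧
        q ^ 3 + 2 * (γ - x) * q ^ 2 + (γ - x) ^ 2 * q - γ ^ 2 = 0)) := by
  have hγ2 : 0 < γ ^ 2 := by positivity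
  have hcubic (q : ℝ) :
      (max (x - γ) 0 < q ∧ q ^ 3 + 2 * (γ - x) * q ^ 2 + (γ - x) ^ 2 * q - γ ^ 2 = 0) ↔
        x - γ < q ∧ (q - 0) * (q - (x - γ)) ^ 2 = γ ^ 2 := by
    refine ⟨fun ⟨hq, hq'⟩ => ⟨(le_max_left _ _).trans_lt hq, by linear_combination hq'⟩,
      fun ⟨hq, hq'⟩ => ⟨max_lt hq (lt_of_sub_mul_sub_sq_eq hγ2 hq'), by linear_combination hq'⟩⟩
  refine ⟨⟨fun p hp => isProxE_fhyp hγ hp, existsUnique_sub_mul_sub_sq_eq' hγ⟩,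
    fun q hq => (hcubic q).2 ?_, (existsUnique_congr hcubic).2 (existsUnique_sub_mul_sub_sq_eq hγ2)⟩
  simpa only [sub_zero] using isProxE_sqrt_sub_one_sq hγ hq
end
end
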